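/- arXiv:math/0607726 — 7 statements merged into one kernel-verified Lean document; each statement's English description precedes it below -/
import Mathlib

section
/- Let R be a principal ideal domain and let C be a 2-3 subcategory of finitely generated R-modules. If C contains a module M of positive rank (χ_0(M) ≥ 1), then C contains every finitely generated torsion R-module. -/
open TensorProduct DirectSum

universe u

/-- A class of `R`-modules (in `Type u`), given as a predicate. -/
abbrev ModuleClass (R : Type u) [CommRing R] :=
  ∀ (M : Type u) [AddCommGroup M] [Module R M], Prop

/-- `𝒞` is a 2-3 subcategory of finitely generated `R`-modules: a class of finitely
generated modules, closed under isomorphism, such that for every short exact sequence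
`0 → A → B → C → 0` of finitely generated modules, if two of the three terms lie in `𝒞`
then so does the third. -/
def IsTwoThreeSubcategory (R : Type u) [CommRing R] (𝒞 : ModuleClass R) : Prop :=
  (∀ (M : Type u) [AddCommGroup M] [Module R M], 𝒞 M → Module.Finite R M) ∧
  (∀ (M N : Type u) [AddCommGroup M] [Module R M] [AddCommGroup N] [Module R N],
      (M ≃ₗ[R] N) → 𝒞 M → 𝒞 N) ∧
  (∀ (A B C : Type u) [AddCommGroup A] [Module R A] [AddCommGroup B] [Module R B]
      [AddCommGroup C] [Module R C],
      Module.Finite R A → Module.Finite R B → Module.Finite R C →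
      ∀ (f : A →ₗ[R] B) (g : B →ₗ[R] C),
        Function.Injective f → Function.Surjective g →
        LinearMap.range f = LinearMap.ker g →
        ((𝒞 A → 𝒞 B → 𝒞 C) ∧ (𝒞 A → 𝒞 C → 𝒞 B) ∧ (𝒞 B → 𝒞 C → 𝒞 A)))

/-- `χ₀ X` : the dimension of `Frac(R) ⊗_R X` over the fraction field (the rank of `X`). -/
noncomputable def chiZero (R : Type u) [CommRing R] [IsDomain R]
    (X : Type u) [AddCommGroup X] [Module R X] : ℕ :=
  Module.finrank (FractionRing R) (FractionRing R ⊗[R] X)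

/-- The length of a module: the Krull dimension of its lattice of submodules. -/
noncomputable def moduleLength (A : Type u) [CommRing A]
    (M : Type u) [AddCommGroup M] [Module A M] : WithBot ℕ∞ :=
  Order.krullDim (Submodule A M)

/-- `χ_p X` : the length of `R_(p) ⊗_R X` as a module over the localization `R_(p)`. -/
noncomputable def chiP (R : Type u) [CommRing R] (p : Ideal R) (hp : p.IsPrime)
    (X : Type u) [AddCommGroup X] [Module R X] : WithBot ℕ∞ :=
  letI := hp
  moduleLength (Localization.AtPrime p) (Localization.AtPrime p ⊗[R] X)

section Aux

variable {R : Type u} [CommRing R] {𝒞 : ModuleClass R}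

/-- The trivial module lies in any nonempty 2-3 subcategory. -/
theorem aux_punit (h : IsTwoThreeSubcategory R 𝒞)
    {M : Type u} [AddCommGroup M] [Module R M] (hM : 𝒞 M) : 𝒞 PUnit := by
  have hfin : Module.Finite R M := h.1 M hM
  have hsurj : Function.Surjective (0 : M →ₗ[R] PUnit.{u+1}) := fun x => ⟨0, Subsingleton.elim _ _⟩
  have hfinP : Module.Finite R PUnit.{u+1} := Module.Finite.of_surjective _ hsurj
  exact (h.2.2 M M PUnit hfin hfin hfinP LinearMap.id 0 (fun a b hab => hab) hsurj
    (by rw [LinearMap.range_id, LinearMap.ker_zero])).1 hM hM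

/-- 2-3 subcategories are closed under binary products. -/
theorem aux_prod (h : IsTwoThreeSubcategory R 𝒞)
    {A B : Type u} [AddCommGroup A] [Module R A] [AddCommGroup B] [Module R B]
    (hA : 𝒞 A) (hB : 𝒞 B) : 𝒞 (A × B) := by
  have fA := h.1 A hA
  have fB := h.1 B hB
  have fAB : Module.Finite R (A × B) := Module.Finite.prod
  have hsnd : Function.Surjective (LinearMap.snd R A B) := fun b => ⟨(0, b), rfl⟩
  have hrk : LinearMap.range (LinearMap.inl R A B) = LinearMap.ker (LinearMap.snd R A B) := by
    ext ⟨a, b⟩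
    simp only [LinearMap.mem_range, LinearMap.mem_ker, LinearMap.inl_apply, LinearMap.snd_apply,
      Prod.mk.injEq]
    constructor
    · rintro ⟨x, rfl, rfl⟩; rfl
    · intro hb; exact ⟨a, rfl, hb.symm⟩
  exact (h.2.2 A (A × B) B fA fAB fB (LinearMap.inl R A B) (LinearMap.snd R A B)
    LinearMap.inl_injective hsnd hrk).2.1 hA hB

/-- 2-3 subcategories are closed under finite (dependent) products. -/
theorem aux_pi (h : IsTwoThreeSubcategory R 𝒞) (hP : 𝒞 PUnit) :
    ∀ (n : ℕ) (ι : Type u) [Fintype ι] (f : ι → Type u)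
      [∀ i, AddCommGroup (f i)] [∀ i, Module R (f i)],
      Fintype.card ι = n → (∀ i, 𝒞 (f i)) → 𝒞 ((i : ι) → f i) := by
  intro n
  induction n with
  | zero =>
    intro ι _ f _ _ hc _
    haveI : IsEmpty ι := Fintype.card_eq_zero_iff.mp hc
    exact h.2.1 PUnit _ (LinearEquiv.ofSubsingleton _ _) hP
  | succ k ih =>
    intro ι _ f _ _ hc hf
    classical
    obtain ⟨i0⟩ : Nonempty ι := Fintype.card_pos_iff.mp (by omega)
    have hcard : Fintype.card {j : ι // j ≠ i0} = k := by
      have h1 := Fintype.card_subtype_compl (fun j : ι => j = i0)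
      rw [Fintype.card_subtype_eq, hc] at h1
      simpa using h1
    have hrest : 𝒞 ((j : {j : ι // j ≠ i0}) → f j) := ih _ _ hcard (fun j => hf j)
    have hsplit : 𝒞 (f i0 × ((j : {j : ι // j ≠ i0}) → f j)) := aux_prod h (hf i0) hrest
    refine h.2.1 _ _ (LinearEquiv.symm ?_) hsplit
    exact { Equiv.piSplitAt i0 f with
      map_add' := fun _ _ => rfl
      map_smul' := fun _ _ => rfl }

/-- If `R × W` lies in a 2-3 subcategory, then so does every cyclic torsion module
`R ⧸ (a)` for `a ≠ 0`. -/
theorem aux_cyclic [IsDomain R] (h : IsTwoThreeSubcategory R 𝒞)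
    {W : Type u} [AddCommGroup W] [Module R W]
    (hRW : 𝒞 (R × W)) (a : R) (ha : a ≠ 0) :
    𝒞 (R ⧸ (Submodule.span R {a} : Submodule R R)) := by
  have fRW : Module.Finite R (R × W) := h.1 _ hRW
  have fQ : Module.Finite R (R ⧸ (Submodule.span R {a} : Submodule R R)) :=
    Module.Finite.of_surjective _ (Submodule.mkQ_surjective _)
  set φ : R × W →ₗ[R] R × W := (LinearMap.lsmul R R a).prodMap LinearMap.id with hφ
  have hinj : Function.Injective φ := by
    rintro ⟨x, w⟩ ⟨y, v⟩ hxy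
    simp only [hφ, LinearMap.prodMap_apply, LinearMap.lsmul_apply, LinearMap.id_apply,
      smul_eq_mul, Prod.mk.injEq] at hxy
    exact Prod.ext (mul_left_cancel₀ ha hxy.1) hxy.2
  set g : R × W →ₗ[R] R ⧸ (Submodule.span R {a} : Submodule R R) :=
    (Submodule.span R {a}).mkQ.comp (LinearMap.fst R R W) with hg
  have hsurj : Function.Surjective g := by
    intro z
    obtain ⟨r, rfl⟩ := Submodule.mkQ_surjective _ z
    exact ⟨(r, 0), rfl⟩
  have hrk : LinearMap.range φ = LinearMap.ker g := by
    ext ⟨r, w⟩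
    simp only [hφ, hg, LinearMap.mem_range, LinearMap.mem_ker, LinearMap.prodMap_apply,
      LinearMap.lsmul_apply, LinearMap.id_apply, LinearMap.comp_apply, LinearMap.fst_apply,
      Submodule.mkQ_apply, Prod.mk.injEq, Submodule.Quotient.mk_eq_zero,
      Submodule.mem_span_singleton]
    constructor
    · rintro ⟨⟨s, v⟩, hs, hv⟩
      exact ⟨s, by rw [← hs]; simp [smul_eq_mul, mul_comm]⟩
    · rintro ⟨c, hc⟩
      exact ⟨(c, w), by simp [smul_eq_mul, ← hc, mul_comm], rfl⟩
  exact (h.2.2 _ _ _ fRW fRW fQ φ g hinj hsurj hrk).1 hRW hRW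

/-- Every finitely generated direct sum of cyclic torsion quotients is torsion. -/
theorem aux_directSum_isTorsion [IsDomain R] (ι : Type u) [Fintype ι]
    (p : ι → R) (hp : ∀ i, Irreducible (p i)) (e : ι → ℕ) :
    Module.IsTorsion R (⨁ i : ι, R ⧸ (Submodule.span R {p i ^ e i} : Submodule R R)) := by
  classical
  intro x
  have hprod : (∏ i : ι, p i ^ e i) ≠ 0 :=
    Finset.prod_ne_zero_iff.mpr fun i _ => pow_ne_zero _ (hp i).ne_zero
  refine ⟨⟨∏ i : ι, p i ^ e i, mem_nonZeroDivisors_of_ne_zero hprod⟩, ?_⟩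
  refine DFinsupp.ext fun i => ?_
  rw [DFinsupp.smul_apply, DFinsupp.zero_apply]
  obtain ⟨r, hr⟩ := Submodule.mkQ_surjective _ (x i)
  rw [← hr, Submodule.mkQ_apply, Submonoid.mk_smul, ← Submodule.Quotient.mk_smul,
    Submodule.Quotient.mk_eq_zero, Submodule.mem_span_singleton]
  obtain ⟨c, hc⟩ : p i ^ e i ∣ ∏ j : ι, p j ^ e j := Finset.dvd_prod_of_mem _ (Finset.mem_univ i)
  exact ⟨c * r, by rw [smul_eq_mul, smul_eq_mul, hc]; ring⟩

end Aux

/-- over a PID, a 2-3 subcategory containing a module of positive rank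
contains every finitely generated torsion module. -/
theorem twoThree_contains_all_torsion (R : Type u) [CommRing R] [IsDomain R]
    [IsPrincipalIdealRing R] (𝒞 : ModuleClass R) (h : IsTwoThreeSubcategory R 𝒞)
    (M : Type u) [AddCommGroup M] [Module R M] (hM : 𝒞 M) (hrank : 1 ≤ chiZero R M) :
    ∀ (X : Type u) [AddCommGroup X] [Module R X],
      Module.Finite R X → Module.IsTorsion R X → 𝒞 X := by
  classical
  intro X _ _ hXfin hXtor
  have hMfin : Module.Finite R M := h.1 M hM
  obtain ⟨n, ι, fι, p, hp, e, ⟨eM⟩⟩ := Module.equiv_free_prod_directSum (R := R) (M := M)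
  -- Step 1: `n ≥ 1`.
  have hn : n ≠ 0 := by
    rintro rfl
    have hD := aux_directSum_isTorsion (R := R) ι p hp e
    have htor : Module.IsTorsion R M := by
      intro x
      obtain ⟨c, hcx⟩ := hD (x := (eM x).2)
      refine ⟨c, ?_⟩
      show (c : R) • x = 0
      apply eM.injective
      rw [map_smul, map_zero]
      refine Prod.ext (Finsupp.ext fun j => Fin.elim0 j) ?_
      show ((c : R) • eM x).2 = 0
      rw [Prod.smul_snd]
      exact hcx
    have hsub : ∀ z : FractionRing R ⊗[R] M, z = 0 := by
      intro z
      induction z using TensorProduct.induction_on with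
      | zero => rfl
      | tmul k m =>
        obtain ⟨⟨c, hc⟩, hcm⟩ := htor (x := m)
        have hc0 : algebraMap R (FractionRing R) c ≠ 0 := by
          simp only [ne_eq, IsFractionRing.to_map_eq_zero_iff]
          exact nonZeroDivisors.ne_zero hc
        have key : (algebraMap R (FractionRing R) c) ⊗ₜ[R] m = 0 := by
          rw [Algebra.algebraMap_eq_smul_one, TensorProduct.smul_tmul]
          have : c • m = 0 := hcm
          rw [this, TensorProduct.tmul_zero]
        calc k ⊗ₜ[R] m
            = ((k * (algebraMap R (FractionRing R) c)⁻¹) * algebraMap R (FractionRing R) c)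
                ⊗ₜ[R] m := by
              rw [mul_assoc, inv_mul_cancel₀ hc0, mul_one]
          _ = (k * (algebraMap R (FractionRing R) c)⁻¹)
                • ((algebraMap R (FractionRing R) c) ⊗ₜ[R] m) := by
              rw [TensorProduct.smul_tmul', smul_eq_mul]
          _ = 0 := by rw [key, smul_zero]
      | add x y hx hy => rw [hx, hy, add_zero]
    have hss : Subsingleton (FractionRing R ⊗[R] M) :=
      ⟨fun a b => by rw [hsub a, hsub b]⟩
    have : chiZero R M = 0 := Module.finrank_zero_of_subsingleton
    omega
  obtain ⟨m, rfl⟩ := Nat.exists_eq_succ_of_ne_zero hn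
  -- Step 2: `M ≃ R × W`, so all cyclic torsion modules lie in `𝒞`.
  set D := ⨁ i : ι, R ⧸ (Submodule.span R {p i ^ e i} : Submodule R R) with hD
  have e1 : (Fin (m + 1) →₀ R) ≃ₗ[R] (Fin (m + 1) → R) :=
    Finsupp.linearEquivFunOnFinite R R (Fin (m + 1))
  have e2 : (Fin (m + 1) → R) ≃ₗ[R] R × (Fin m → R) :=
    { toFun := fun f => (f 0, fun j => f j.succ)
      invFun := fun x => Fin.cons x.1 x.2
      map_add' := fun _ _ => rfl
      map_smul' := fun _ _ => rfl
      left_inv := fun f => Fin.cons_self_tail f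
      right_inv := fun x => by
        dsimp only
        refine Prod.ext ?_ (funext fun j => ?_) <;> simp }
  have eRW : M ≃ₗ[R] R × ((Fin m → R) × D) :=
    eM.trans (((e1.trans e2).prodCongr (LinearEquiv.refl R D)).trans
      (LinearEquiv.prodAssoc R R (Fin m → R) D))
  have hRW : 𝒞 (R × ((Fin m → R) × D)) := h.2.1 M _ eRW hM
  -- Step 3: decompose `X` and conclude.
  obtain ⟨κ, fκ, q, hq, f, ⟨eX⟩⟩ := Module.equiv_directSum_of_isTorsion (R := R) (M := X) hXtor
  have hcyc : ∀ j : κ, 𝒞 (R ⧸ (Submodule.span R {q j ^ f j} : Submodule R R)) := fun j =>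
    aux_cyclic h hRW _ (pow_ne_zero _ (hq j).ne_zero)
  have hPi : 𝒞 ((j : κ) → R ⧸ (Submodule.span R {q j ^ f j} : Submodule R R)) :=
    aux_pi h (aux_punit h hM) (Fintype.card κ) κ _ rfl hcyc
  have hSum : 𝒞 (⨁ j : κ, R ⧸ (Submodule.span R {q j ^ f j} : Submodule R R)) :=
    h.2.1 _ _ (DirectSum.linearEquivFunOnFintype R κ _).symm hPi
  exact h.2.1 _ _ eX.symm hSum
end

section
/- Let R be a principal ideal domain and let C be a 2-3 subcategory of finitely generated R-modules containing at least one module of positive rank. Let k be the smallest positive value of χ_0 attained on members of C. Then C = I_k = {X a finitely generated R-module : χ_0(X) ≡ 0 (mod k)}. -/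
set_option maxHeartbeats 1000000


open TensorProduct

universe u

section Aux

open Submodule

variable {R : Type u} [CommRing R] [IsDomain R]

/-- upgrade an `R`-linear equiv between `FractionRing R`-modules to a `K`-linear one. -/
noncomputable def TwoThree.extEquiv {V W : Type u} [AddCommGroup V] [Module R V]
    [Module (FractionRing R) V] [IsScalarTower R (FractionRing R) V]
    [AddCommGroup W] [Module R W] [Module (FractionRing R) W]
    [IsScalarTower R (FractionRing R) W] (e : V ≃ₗ[R] W) : V ≃ₗ[FractionRing R] W :=
  LinearEquiv.ofLinear
    (LinearMap.extendScalarsOfIsLocalization (nonZeroDivisors R) (FractionRing R) e.toLinearMap)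
    (LinearMap.extendScalarsOfIsLocalization (nonZeroDivisors R) (FractionRing R)
      e.symm.toLinearMap)
    (by ext x; simp) (by ext x; simp)

theorem TwoThree.chi_congr {X Y : Type u} [AddCommGroup X] [Module R X] [AddCommGroup Y]
    [Module R Y] (e : X ≃ₗ[R] Y) : chiZero R X = chiZero R Y :=
  (TensorProduct.AlgebraTensorModule.congr
    (LinearEquiv.refl (FractionRing R) (FractionRing R)) e).finrank_eq

theorem TwoThree.chi_prod (A B : Type u) [AddCommGroup A] [Module R A] [AddCommGroup B]
    [Module R B] [Module.Finite R A] [Module.Finite R B] :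
    chiZero R (A × B) = chiZero R A + chiZero R B := by
  have e : (FractionRing R ⊗[R] (A × B)) ≃ₗ[FractionRing R]
      (FractionRing R ⊗[R] A) × (FractionRing R ⊗[R] B) :=
    TwoThree.extEquiv (TensorProduct.prodRight R R (FractionRing R) A B)
  rw [chiZero, e.finrank_eq, Module.finrank_prod]; rfl

theorem TwoThree.chi_fin (n : ℕ) : chiZero R (Fin n →₀ R) = n := by
  rw [chiZero, Module.finrank_baseChange, Module.finrank_finsupp_self, Fintype.card_fin]

theorem TwoThree.chi_torsion (T : Type u) [AddCommGroup T] [Module R T]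
    (hT : Module.IsTorsion R T) : chiZero R T = 0 := by
  have : Subsingleton (FractionRing R ⊗[R] T) := by
    constructor
    suffices h : ∀ z : FractionRing R ⊗[R] T, z = 0 by intro x y; rw [h x, h y]
    intro z
    induction z using TensorProduct.induction_on with
    | zero => rfl
    | add a b ha hb => rw [ha, hb, add_zero]
    | tmul k t =>
      obtain ⟨a, h0⟩ := @hT t
      have hka : algebraMap R (FractionRing R) a ≠ 0 :=
        IsFractionRing.to_map_ne_zero_of_mem_nonZeroDivisors a.2
      have hk : k = (a : R) • ((algebraMap R (FractionRing R) a)⁻¹ * k) := by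
        rw [Algebra.smul_def, ← mul_assoc, mul_inv_cancel₀ hka, one_mul]
      rw [hk, TensorProduct.smul_tmul, Submonoid.smul_def] at *
      rw [h0, TensorProduct.tmul_zero]
  exact Module.finrank_zero_of_subsingleton

variable [IsPrincipalIdealRing R]

theorem TwoThree.decomp (X : Type u) [AddCommGroup X] [Module R X] [Module.Finite R X] :
    ∃ n : ℕ, Nonempty (X ≃ₗ[R] ↥(torsion R X) × (Fin n →₀ R)) := by
  haveI : Module.Finite R (X ⧸ torsion R X) :=
    Module.Finite.of_surjective _ (torsion R X).mkQ_surjective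
  obtain ⟨n, g⟩ := Module.basisOfFiniteTypeTorsionFree' (R := R) (M := X ⧸ torsion R X)
  haveI : Module.Projective R (X ⧸ torsion R X) := Module.Projective.of_basis g
  obtain ⟨f, hf⟩ := Module.projective_lifting_property _ LinearMap.id (torsion R X).mkQ_surjective
  exact ⟨n, ⟨((lequivProdOfRightSplitExact (torsion R X).injective_subtype
    (by rw [range_subtype, ker_mkQ]) hf).symm.trans
    ((LinearEquiv.refl R _).prodCongr g.repr))⟩⟩

theorem TwoThree.decomp' (X : Type u) [AddCommGroup X] [Module R X] [Module.Finite R X] :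
    Nonempty (X ≃ₗ[R] ↥(torsion R X) × (Fin (chiZero R X) →₀ R)) := by
  obtain ⟨n, ⟨e⟩⟩ := TwoThree.decomp (R := R) X
  haveI : IsNoetherian R X := isNoetherian_of_isNoetherianRing_of_finite R X
  haveI : Module.Finite R ↥(torsion R X) :=
    Module.Finite.iff_fg.mpr (IsNoetherian.noetherian (Submodule.torsion R X))
  have hn : chiZero R X = n := by
    rw [TwoThree.chi_congr e, TwoThree.chi_prod,
      TwoThree.chi_torsion _ (torsion_isTorsion), TwoThree.chi_fin, zero_add]
  rw [hn]; exact ⟨e⟩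

variable {𝒞 : ModuleClass R} (h : IsTwoThreeSubcategory R 𝒞)

include h

/-- any subsingleton module lies in `𝒞`, provided `𝒞` is nonempty. -/
theorem TwoThree.c_sub {M : Type u} [AddCommGroup M] [Module R M] (hM : 𝒞 M)
    (N : Type u) [AddCommGroup N] [Module R N] [Subsingleton N] : 𝒞 N := by
  haveI : Module.Finite R M := h.1 M hM
  haveI : Module.Finite R N :=
    Module.Finite.of_surjective (0 : M →ₗ[R] N) (fun n => ⟨0, Subsingleton.elim _ _⟩)
  exact (h.2.2 M M N (h.1 M hM) (h.1 M hM) inferInstance LinearMap.id 0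
    (fun a b hb => hb) (fun n => ⟨0, Subsingleton.elim _ _⟩)
    (by rw [LinearMap.range_id, LinearMap.ker_zero])).1 hM hM

theorem TwoThree.c_prod23 (A B : Type u) [AddCommGroup A] [Module R A] [AddCommGroup B]
    [Module R B] [Module.Finite R A] [Module.Finite R B] :
    (𝒞 A → 𝒞 (A × B) → 𝒞 B) ∧ (𝒞 A → 𝒞 B → 𝒞 (A × B)) ∧ (𝒞 (A × B) → 𝒞 B → 𝒞 A) :=
  h.2.2 A (A × B) B inferInstance inferInstance inferInstance
    (LinearMap.inl R A B) (LinearMap.snd R A B) LinearMap.inl_injective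
    LinearMap.snd_surjective (LinearMap.range_inl R A B)

theorem TwoThree.c_triple (A B C : Type u) [AddCommGroup A] [Module R A] [AddCommGroup B]
    [Module R B] [AddCommGroup C] [Module R C] [Module.Finite R A] [Module.Finite R B]
    [Module.Finite R C] (hbig : 𝒞 (A × (B × C))) (hC : 𝒞 C) : 𝒞 (A × B) := by
  refine (h.2.2 C (A × (B × C)) (A × B) inferInstance inferInstance inferInstance
    ((LinearMap.inr R A (B × C)).comp (LinearMap.inr R B C))
    ((LinearMap.id : A →ₗ[R] A).prodMap (LinearMap.fst R B C))
    (LinearMap.inr_injective.comp LinearMap.inr_injective)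
    (fun x => ⟨(x.1, (x.2, 0)), rfl⟩) ?_).1 hC hbig
  apply le_antisymm
  · rintro _ ⟨c, rfl⟩
    simp [LinearMap.mem_ker, Prod.ext_iff]
  · rintro ⟨a, b, c⟩ hx
    simp only [LinearMap.mem_ker, LinearMap.prodMap_apply, LinearMap.id_coe, id_eq,
      LinearMap.fst_apply, Prod.mk_eq_zero] at hx
    exact ⟨c, by simp [Prod.ext_iff, hx.1, hx.2]⟩

/-- every cyclic torsion module `R ⧸ I`, `I ≠ ⊥`, lies in `𝒞`. -/
theorem TwoThree.c_cyclic {M : Type u} [AddCommGroup M] [Module R M] [Module.Finite R M]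
    (hM : 𝒞 M) (n : ℕ) (hMk : chiZero R M = n + 1) :
    ∀ I : Submodule R R, I ≠ ⊥ → 𝒞 (R ⧸ I) := by
  intro I hI
  obtain ⟨a, ha⟩ := (IsPrincipalIdealRing.principal I).principal
  have ha0 : a ≠ 0 := by
    rintro rfl
    rw [ha] at hI
    exact hI (Submodule.span_zero_singleton R)
  obtain ⟨eM⟩ := TwoThree.decomp' (R := R) M
  rw [hMk] at eM
  haveI : IsNoetherian R M := isNoetherian_of_isNoetherianRing_of_finite R M
  haveI : Module.Finite R ↥(torsion R M) :=
    Module.Finite.iff_fg.mpr (IsNoetherian.noetherian _)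
  have eF : (Fin (n + 1) →₀ R) ≃ₗ[R] R × (Fin n →₀ R) :=
    (Finsupp.domLCongr ((finCongr (Nat.add_comm n 1)).trans finSumFinEquiv.symm)).trans
      ((Finsupp.sumFinsuppLEquivProdFinsupp R).trans
        ((Finsupp.LinearEquiv.finsuppUnique R R (Fin 1)).prodCongr (LinearEquiv.refl R (Fin n →₀ R))))
  have e : M ≃ₗ[R] ↥(torsion R M) × (R × (Fin n →₀ R)) :=
    eM.trans ((LinearEquiv.refl R ↥(torsion R M)).prodCongr eF)
  set X := ↥(torsion R M) × (R × (Fin n →₀ R)) with hX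
  have hCX : 𝒞 X := h.2.1 M X e hM
  have hXfin : Module.Finite R X := inferInstance
  have hQfin : Module.Finite R (R ⧸ I) := Module.Finite.of_surjective _ I.mkQ_surjective
  refine (h.2.2 X X (R ⧸ I) hXfin hXfin hQfin
    ((LinearMap.id : ↥(torsion R M) →ₗ[R] ↥(torsion R M)).prodMap
      ((LinearMap.lsmul R R a).prodMap (LinearMap.id : (Fin n →₀ R) →ₗ[R] (Fin n →₀ R))))
    (I.mkQ ∘ₗ (LinearMap.fst R R (Fin n →₀ R)) ∘ₗ
      (LinearMap.snd R ↥(torsion R M) (R × (Fin n →₀ R))))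
    ?_ ?_ ?_).1 hCX hCX
  · refine Function.Injective.prodMap (fun x y hxy => hxy)
      (Function.Injective.prodMap ?_ (fun x y hxy => hxy))
    intro x y hxy
    have hax : a * x = a * y := by
      exact hxy
    exact mul_left_cancel₀ ha0 hax
  · intro z
    obtain ⟨r, hr⟩ := I.mkQ_surjective z
    exact ⟨(0, r, 0), hr⟩
  · ext x
    obtain ⟨t, r, v⟩ := x
    rw [LinearMap.mem_ker]
    constructor
    · rintro ⟨⟨t', r', v'⟩, heq⟩
      rw [← heq]
      show (Submodule.Quotient.mk (a • r') : R ⧸ I) = 0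
      rw [Submodule.Quotient.mk_eq_zero, ha]
      exact Submodule.mem_span_singleton.mpr ⟨r', by rw [smul_eq_mul, smul_eq_mul, mul_comm]⟩
    · intro hg
      have hr : r ∈ I := by
        rw [← Submodule.Quotient.mk_eq_zero]
        exact hg
      rw [ha] at hr
      obtain ⟨c, hc⟩ := Submodule.mem_span_singleton.mp hr
      refine ⟨(t, c, v), ?_⟩
      show (t, (a • c, v)) = (t, (r, v))
      rw [smul_eq_mul, mul_comm, ← smul_eq_mul, hc]

/-- every finitely generated torsion module lies in `𝒞`. -/
theorem TwoThree.c_torsion_aux {M : Type u} [AddCommGroup M] [Module R M] [Module.Finite R M]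
    (hM : 𝒞 M) (hcyc : ∀ I : Submodule R R, I ≠ ⊥ → 𝒞 (R ⧸ I)) :
    ∀ (n : ℕ) (T : Type u) [AddCommGroup T] [Module R T], Module.IsTorsion R T →
      ∀ s : Fin n → T, span R (Set.range s) = ⊤ → 𝒞 T := by
  intro n
  induction n with
  | zero =>
    intro T _ _ hT s hs
    haveI : Subsingleton T := by
      constructor
      intro x y
      rw [Set.range_eq_empty s, span_empty] at hs
      have hx : x ∈ (⊥ : Submodule R T) := hs.symm ▸ Submodule.mem_top
      have hy : y ∈ (⊥ : Submodule R T) := hs.symm ▸ Submodule.mem_top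
      rw [Submodule.mem_bot] at hx hy
      rw [hx, hy]
    exact TwoThree.c_sub h hM T
  | succ n ih =>
    intro T _ _ hT s hs
    haveI hTfin : Module.Finite R T := by
      refine Module.finite_def.mpr ⟨(Set.finite_range s).toFinset, ?_⟩
      rwa [Set.Finite.coe_toFinset]
    haveI : IsNoetherian R T := isNoetherian_of_isNoetherianRing_of_finite R T
    set φ := LinearMap.toSpanSingleton R T (s 0) with hφ
    set N := LinearMap.range φ with hN
    haveI : Module.Finite R ↥N := Module.Finite.iff_fg.mpr (IsNoetherian.noetherian _)
    haveI : Module.Finite R (T ⧸ N) := Module.Finite.of_surjective _ N.mkQ_surjective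
    -- N ≃ R ⧸ ker φ, and ker φ ≠ ⊥
    have hker : LinearMap.ker φ ≠ ⊥ := by
      obtain ⟨a, h0⟩ := @hT (s 0)
      intro hbot
      have : (a : R) ∈ LinearMap.ker φ := by
        rw [LinearMap.mem_ker, hφ, LinearMap.toSpanSingleton_apply]
        exact h0
      rw [hbot, Submodule.mem_bot] at this
      exact nonZeroDivisors.coe_ne_zero a this
    have hCN : 𝒞 ↥N := h.2.1 _ _ (φ.quotKerEquivRange) (hcyc _ hker)
    -- the quotient is torsion and generated by n elements
    have hTq : Module.IsTorsion R (T ⧸ N) := by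
      intro x
      obtain ⟨y, rfl⟩ := N.mkQ_surjective x
      obtain ⟨a, h0⟩ := @hT y
      exact ⟨a, by rw [Submonoid.smul_def, ← map_smul, ← Submonoid.smul_def, h0, map_zero]⟩
    have hCQ : 𝒞 (T ⧸ N) := by
      refine ih (T ⧸ N) hTq (Fin.tail (⇑N.mkQ ∘ s)) ?_
      have h2 : span R (Set.range (⇑N.mkQ ∘ s)) = ⊤ := by
        rw [Set.range_comp, Submodule.span_image, hs, Submodule.map_top, Submodule.range_mkQ]
      rw [Fin.range_fin_succ] at h2
      have h3 : (⇑N.mkQ ∘ s) 0 = 0 := by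
        show N.mkQ (s 0) = 0
        rw [Submodule.mkQ_apply, Submodule.Quotient.mk_eq_zero]
        exact ⟨1, by simp [hφ, LinearMap.toSpanSingleton_apply]⟩
      rw [h3, Submodule.span_insert_zero] at h2
      exact h2
    exact (h.2.2 ↥N T (T ⧸ N) inferInstance inferInstance inferInstance
      N.subtype N.mkQ N.injective_subtype N.mkQ_surjective
      (by rw [range_subtype, ker_mkQ])).2.1 hCN hCQ

end Aux

/-- over a PID, if a 2-3 subcategory `𝒞` contains a module of positive
rank and `k` is the smallest positive value of `χ₀` attained on members of `𝒞`, then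
`𝒞 = I_k = {X fin. gen. : χ₀(X) ≡ 0 (mod k)}`. -/
theorem twoThree_eq_Ik (R : Type u) [CommRing R] [IsDomain R] [IsPrincipalIdealRing R]
    (𝒞 : ModuleClass R) (h : IsTwoThreeSubcategory R 𝒞)
    (k : ℕ) (hk : 0 < k)
    (M : Type u) [AddCommGroup M] [Module R M] (hM : 𝒞 M) (hMk : chiZero R M = k)
    (hmin : ∀ (X : Type u) [AddCommGroup X] [Module R X],
      𝒞 X → 0 < chiZero R X → k ≤ chiZero R X) :
    ∀ (X : Type u) [AddCommGroup X] [Module R X],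
      Module.Finite R X → (𝒞 X ↔ k ∣ chiZero R X) := by
  classical
  obtain ⟨hfin, hiso, hses⟩ := h
  have h : IsTwoThreeSubcategory R 𝒞 := ⟨hfin, hiso, hses⟩
  haveI hMfin : Module.Finite R M := hfin M hM
  -- cyclic torsion modules are in 𝒞
  have hcyc : ∀ I : Submodule R R, I ≠ ⊥ → 𝒞 (R ⧸ I) :=
    TwoThree.c_cyclic h hM (k - 1) (by omega)
  -- all f.g. torsion modules are in 𝒞
  have htor : ∀ (T : Type u) [AddCommGroup T] [Module R T], Module.Finite R T →
      Module.IsTorsion R T → 𝒞 T := by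
    intro T _ _ hTfin hT
    obtain ⟨n, s, hs⟩ := Module.Finite.exists_fin (R := R) (M := T)
    exact TwoThree.c_torsion_aux h hM hcyc n T hT s hs
  -- `R^k ∈ 𝒞`
  have hFk : 𝒞 (Fin k →₀ R) := by
    obtain ⟨eM⟩ := TwoThree.decomp' (R := R) M
    rw [hMk] at eM
    haveI : Module.Finite R ↥(Submodule.torsion R M) :=
      Module.Finite.iff_fg.mpr (IsNoetherian.noetherian _)
    exact (TwoThree.c_prod23 h _ _).1
      (htor _ inferInstance (Submodule.torsion_isTorsion))
      (hiso M _ eM hM)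
  -- `R^(m*k) ∈ 𝒞` for all m
  have hFmk : ∀ m : ℕ, 𝒞 (Fin (m * k) →₀ R) := by
    intro m
    induction m with
    | zero =>
      haveI : Subsingleton (Fin (0 * k) →₀ R) :=
        ⟨fun f g => Finsupp.ext fun x => absurd x.2 (by simp)⟩
      exact TwoThree.c_sub h hM _
    | succ m ih =>
      have E : (Fin ((m + 1) * k) →₀ R) ≃ₗ[R] (Fin k →₀ R) × (Fin (m * k) →₀ R) :=
        (Finsupp.domLCongr ((finCongr (by ring)).trans finSumFinEquiv.symm)).trans
          (Finsupp.sumFinsuppLEquivProdFinsupp R)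
      exact hiso _ _ E.symm ((TwoThree.c_prod23 h _ _).2.1 hFk ih)
  intro X _ _ hXfin
  haveI : IsNoetherian R X := isNoetherian_of_isNoetherianRing_of_finite R X
  haveI : Module.Finite R ↥(Submodule.torsion R X) :=
    Module.Finite.iff_fg.mpr (IsNoetherian.noetherian _)
  obtain ⟨eX⟩ := TwoThree.decomp' (R := R) X
  constructor
  · intro hX
    by_contra hndvd
    have hsk : chiZero R X % k < k := Nat.mod_lt _ hk
    have hs0 : 0 < chiZero R X % k :=
      Nat.pos_of_ne_zero (fun h0 => hndvd (Nat.dvd_of_mod_eq_zero h0))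
    have eF : (Fin (chiZero R X) →₀ R) ≃ₗ[R]
        (Fin (chiZero R X % k) →₀ R) × (Fin (chiZero R X / k * k) →₀ R) :=
      (Finsupp.domLCongr ((finCongr (Nat.mod_add_div' (chiZero R X) k).symm).trans
        finSumFinEquiv.symm)).trans (Finsupp.sumFinsuppLEquivProdFinsupp R)
    have hbig : 𝒞 (↥(Submodule.torsion R X) ×
        ((Fin (chiZero R X % k) →₀ R) × (Fin (chiZero R X / k * k) →₀ R))) :=
      hiso X _ (eX.trans ((LinearEquiv.refl R ↥(Submodule.torsion R X)).prodCongr eF)) hX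
    have hTS : 𝒞 (↥(Submodule.torsion R X) × (Fin (chiZero R X % k) →₀ R)) :=
      TwoThree.c_triple h _ _ _ hbig (hFmk (chiZero R X / k))
    have hchi : chiZero R (↥(Submodule.torsion R X) × (Fin (chiZero R X % k) →₀ R)) =
        chiZero R X % k := by
      rw [TwoThree.chi_prod, TwoThree.chi_torsion _ (Submodule.torsion_isTorsion),
        TwoThree.chi_fin, zero_add]
    have hge := hmin _ hTS (by rw [hchi]; exact hs0)
    rw [hchi] at hge
    omega
  · rintro ⟨m, hm⟩
    have hF : 𝒞 (Fin (chiZero R X) →₀ R) := by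
      have := hFmk m
      rw [Nat.mul_comm, ← hm] at this
      exact this
    exact hiso _ X eX.symm ((TwoThree.c_prod23 h _ _).2.1
      (htor _ inferInstance (Submodule.torsion_isTorsion)) hF)
end

section
/- Let R be a principal ideal domain, π a prime element of R, and r ≥ 1 an integer. Then there exists a short exact sequence 0 → R/(π^r) → R/(π^{r-1}) ⊕ R/(π^{r+1}) → R/(π^r) → 0 of R-modules. -/
open TensorProduct

universe u

/-- over a PID, for a prime element `π` and `r ≥ 1` there is a short
exact sequence `0 → R/(π^r) → R/(π^(r-1)) ⊕ R/(π^(r+1)) → R/(π^r) → 0`. -/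
theorem exists_ses_split_prime_pow (R : Type u) [CommRing R] [IsDomain R]
    [IsPrincipalIdealRing R] (π : R) (hπ : Prime π) (r : ℕ) (hr : 1 ≤ r) :
    ∃ (f : (R ⧸ Ideal.span {π ^ r}) →ₗ[R]
          (R ⧸ Ideal.span {π ^ (r - 1)}) × (R ⧸ Ideal.span {π ^ (r + 1)}))
      (g : (R ⧸ Ideal.span {π ^ (r - 1)}) × (R ⧸ Ideal.span {π ^ (r + 1)}) →ₗ[R]
          R ⧸ Ideal.span {π ^ r}),
      Function.Injective f ∧ Function.Surjective g ∧
      LinearMap.range f = LinearMap.ker g := by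
  have hrr : r - 1 + 1 = r := Nat.succ_pred_eq_of_pos hr
  have hπr : π ^ r ≠ 0 := pow_ne_zero _ hπ.ne_zero
  have hstep : π * π ^ (r - 1) = π ^ r := by rw [← pow_succ', hrr]
  have h1 : (Ideal.span {π ^ r} : Submodule R R) ≤
      Submodule.comap (LinearMap.id : R →ₗ[R] R) (Ideal.span {π ^ (r - 1)}) := by
    intro x hx
    simp only [Submodule.mem_comap, LinearMap.id_coe, id_eq]
    rw [Ideal.mem_span_singleton] at *
    exact dvd_trans (pow_dvd_pow π (Nat.sub_le r 1)) hx
  have h2 : (Ideal.span {π ^ r} : Submodule R R) ≤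
      Submodule.comap (LinearMap.lsmul R R π) (Ideal.span {π ^ (r + 1)}) := by
    intro x hx
    simp only [Submodule.mem_comap, LinearMap.lsmul_apply, smul_eq_mul]
    rw [Ideal.mem_span_singleton] at *
    rw [pow_succ']
    exact mul_dvd_mul_left π hx
  have h3 : (Ideal.span {π ^ (r - 1)} : Submodule R R) ≤
      Submodule.comap (LinearMap.lsmul R R π) (Ideal.span {π ^ r}) := by
    intro x hx
    simp only [Submodule.mem_comap, LinearMap.lsmul_apply, smul_eq_mul]
    rw [Ideal.mem_span_singleton] at *
    rw [← hstep]
    exact mul_dvd_mul_left π hx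
  have h4 : (Ideal.span {π ^ (r + 1)} : Submodule R R) ≤
      Submodule.comap (LinearMap.id : R →ₗ[R] R) (Ideal.span {π ^ r}) := by
    intro x hx
    simp only [Submodule.mem_comap, LinearMap.id_coe, id_eq]
    rw [Ideal.mem_span_singleton] at *
    exact dvd_trans (pow_dvd_pow π (Nat.le_succ r)) hx
  refine ⟨LinearMap.prod (Submodule.mapQ _ _ LinearMap.id h1)
      (Submodule.mapQ _ _ (LinearMap.lsmul R R π) h2),
    (Submodule.mapQ _ _ (LinearMap.lsmul R R π) h3).comp (LinearMap.fst R _ _) -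
      (Submodule.mapQ _ _ LinearMap.id h4).comp (LinearMap.snd R _ _), ?_, ?_, ?_⟩
  · rw [← LinearMap.ker_eq_bot, eq_bot_iff]
    intro x hx
    obtain ⟨a, rfl⟩ := Submodule.Quotient.mk_surjective _ x
    simp only [LinearMap.mem_ker, LinearMap.prod_apply, Function.prod, Submodule.mapQ_apply,
      LinearMap.id_coe, id_eq, LinearMap.lsmul_apply, smul_eq_mul, Prod.mk_eq_zero,
      Submodule.Quotient.mk_eq_zero] at hx
    obtain ⟨ha, hb⟩ := hx
    rw [Ideal.mem_span_singleton] at ha hb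
    obtain ⟨u, rfl⟩ := ha
    obtain ⟨v, hv⟩ := hb
    simp only [Submodule.mem_bot, Submodule.Quotient.mk_eq_zero]
    rw [Ideal.mem_span_singleton]
    have e : π ^ r * u = π ^ r * (π * v) := by
      calc π ^ r * u = π * (π ^ (r - 1) * u) := by rw [← hstep]; ring
        _ = π ^ (r + 1) * v := hv
        _ = π ^ r * (π * v) := by rw [pow_succ]; ring
    have hu : u = π * v := mul_left_cancel₀ hπr e
    exact ⟨v, by rw [hu, ← hstep]; ring⟩
  · intro c
    obtain ⟨a, rfl⟩ := Submodule.Quotient.mk_surjective _ c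
    refine ⟨(0, Submodule.Quotient.mk (-a)), ?_⟩
    simp only [LinearMap.sub_apply, LinearMap.comp_apply, LinearMap.fst_apply,
      LinearMap.snd_apply, map_zero, Submodule.mapQ_apply, LinearMap.id_coe, id_eq,
      Submodule.Quotient.mk_neg, map_neg, zero_sub, neg_neg]
  · ext x
    constructor
    · rintro ⟨y, rfl⟩
      obtain ⟨c, rfl⟩ := Submodule.Quotient.mk_surjective _ y
      simp only [LinearMap.mem_ker, LinearMap.sub_apply, LinearMap.comp_apply,
        LinearMap.prod_apply, Function.prod, LinearMap.fst_apply, LinearMap.snd_apply,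
        Submodule.mapQ_apply, LinearMap.id_coe, id_eq, LinearMap.lsmul_apply,
        smul_eq_mul, sub_self]
    · intro hx
      obtain ⟨⟨a, b⟩, rfl⟩ : ∃ p : R × R,
          (Submodule.Quotient.mk p.1, Submodule.Quotient.mk p.2) = x := by
        obtain ⟨a, ha⟩ := Submodule.Quotient.mk_surjective _ x.1
        obtain ⟨b, hb⟩ := Submodule.Quotient.mk_surjective _ x.2
        exact ⟨(a, b), by rw [ha, hb]⟩
      simp only [LinearMap.mem_ker, LinearMap.sub_apply, LinearMap.comp_apply,
        LinearMap.fst_apply, LinearMap.snd_apply, Submodule.mapQ_apply,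
        LinearMap.id_coe, id_eq, LinearMap.lsmul_apply, smul_eq_mul,
        ← Submodule.Quotient.mk_sub, Submodule.Quotient.mk_eq_zero] at hx
      rw [Ideal.mem_span_singleton] at hx
      obtain ⟨t, ht⟩ := hx
      refine ⟨Submodule.Quotient.mk (a - π ^ (r - 1) * t), ?_⟩
      simp only [LinearMap.prod_apply, Function.prod, Submodule.mapQ_apply, LinearMap.id_coe,
        id_eq, LinearMap.lsmul_apply, smul_eq_mul]
      refine Prod.ext ?_ ?_
      · rw [Submodule.Quotient.eq]
        rw [Ideal.mem_span_singleton]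
        exact ⟨-t, by ring⟩
      · have : π * (a - π ^ (r - 1) * t) = b := by
          have : π * a - b = π ^ r * t := ht
          calc π * (a - π ^ (r - 1) * t) = π * a - π ^ r * t := by rw [← hstep]; ring
            _ = b := by rw [← this]; ring
        rw [this]
end

section
/- Let R be a principal ideal domain, π a prime element of R, and r ≥ 2 an integer. Then there exists a short exact sequence 0 → R/(π^r) → R/(π^{r-1}) ⊕ R/(π^{r+1}) → R/(π^{r-1}) ⊕ R/(π) → 0 of R-modules. -/
open TensorProduct

universe u

/-- over a PID, for a prime element `π` and `r ≥ 2` there is a short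
exact sequence `0 → R/(π^r) → R/(π^(r-1)) ⊕ R/(π^(r+1)) → R/(π^(r-1)) ⊕ R/(π) → 0`. -/
theorem exists_ses_lower_top_order (R : Type u) [CommRing R] [IsDomain R]
    [IsPrincipalIdealRing R] (π : R) (hπ : Prime π) (r : ℕ) (hr : 2 ≤ r) :
    ∃ (f : (R ⧸ Ideal.span {π ^ r}) →ₗ[R]
          (R ⧸ Ideal.span {π ^ (r - 1)}) × (R ⧸ Ideal.span {π ^ (r + 1)}))
      (g : (R ⧸ Ideal.span {π ^ (r - 1)}) × (R ⧸ Ideal.span {π ^ (r + 1)}) →ₗ[R]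
          (R ⧸ Ideal.span {π ^ (r - 1)}) × (R ⧸ Ideal.span {π})),
      Function.Injective f ∧ Function.Surjective g ∧
      LinearMap.range f = LinearMap.ker g := by
  have h1 : (Ideal.span {π ^ r} : Submodule R R) ≤
      Submodule.comap (LinearMap.lsmul R R π) (Ideal.span {π ^ (r - 1)}) := by
    intro z hz
    rw [Ideal.mem_span_singleton] at hz
    simp only [Submodule.mem_comap, LinearMap.lsmul_apply, smul_eq_mul]
    rw [Ideal.mem_span_singleton]
    exact dvd_mul_of_dvd_right ((pow_dvd_pow π (Nat.sub_le r 1)).trans hz) π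
  have h2 : (Ideal.span {π ^ r} : Submodule R R) ≤
      Submodule.comap (LinearMap.lsmul R R π) (Ideal.span {π ^ (r + 1)}) := by
    intro z hz
    rw [Ideal.mem_span_singleton] at hz
    simp only [Submodule.mem_comap, LinearMap.lsmul_apply, smul_eq_mul]
    rw [Ideal.mem_span_singleton, pow_succ']
    exact mul_dvd_mul_left π hz
  have hq1 : (Ideal.span {π ^ (r + 1)} : Submodule R R) ≤
      Submodule.comap (LinearMap.id (R := R)) (Ideal.span {π ^ (r - 1)}) := by
    intro z hz
    rw [Ideal.mem_span_singleton] at hz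
    simp only [Submodule.mem_comap, LinearMap.id_coe, id_eq]
    rw [Ideal.mem_span_singleton]
    exact (pow_dvd_pow π (by omega)).trans hz
  have hq2 : (Ideal.span {π ^ (r + 1)} : Submodule R R) ≤
      Submodule.comap (LinearMap.id (R := R)) (Ideal.span {π}) := by
    intro z hz
    rw [Ideal.mem_span_singleton] at hz
    simp only [Submodule.mem_comap, LinearMap.id_coe, id_eq]
    rw [Ideal.mem_span_singleton]
    exact (dvd_pow_self π (by omega : r + 1 ≠ 0)).trans hz
  refine ⟨LinearMap.prod (Submodule.mapQ _ _ (LinearMap.lsmul R R π) h1)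
      (Submodule.mapQ _ _ (LinearMap.lsmul R R π) h2),
    LinearMap.prod
      (LinearMap.fst R _ _ - (Submodule.mapQ _ _ LinearMap.id hq1).comp (LinearMap.snd R _ _))
      ((Submodule.mapQ _ _ LinearMap.id hq2).comp (LinearMap.snd R _ _)), ?_, ?_, ?_⟩
  · -- injectivity
    rw [← LinearMap.ker_eq_bot, eq_bot_iff]
    rintro x hx
    obtain ⟨X, rfl⟩ := Submodule.Quotient.mk_surjective _ x
    simp only [LinearMap.mem_ker, LinearMap.prod_apply, Function.prod, Submodule.mapQ_apply,
      LinearMap.lsmul_apply, smul_eq_mul, Prod.mk_eq_zero, Submodule.Quotient.mk_eq_zero] at hx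
    rw [Submodule.mem_bot, Submodule.Quotient.mk_eq_zero]
    have h := hx.2
    rw [Ideal.mem_span_singleton] at h
    rw [Ideal.mem_span_singleton]
    have hd : π * π ^ r ∣ π * X := by rwa [pow_succ'] at h
    exact (mul_dvd_mul_iff_left hπ.ne_zero).mp hd
  · -- surjectivity
    rintro ⟨c, d⟩
    obtain ⟨C, rfl⟩ := Submodule.Quotient.mk_surjective _ c
    obtain ⟨D, rfl⟩ := Submodule.Quotient.mk_surjective _ d
    refine ⟨(Submodule.Quotient.mk (C + D), Submodule.Quotient.mk D), ?_⟩
    simp only [LinearMap.prod_apply, Function.prod, LinearMap.sub_apply, LinearMap.fst_apply,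
      LinearMap.comp_apply, LinearMap.snd_apply, Submodule.mapQ_apply, LinearMap.id_coe, id_eq]
    refine Prod.ext ?_ rfl
    rw [← Submodule.Quotient.mk_sub]
    congr 1
    ring
  · -- exactness
    apply le_antisymm
    · rintro _ ⟨x, rfl⟩
      obtain ⟨X, rfl⟩ := Submodule.Quotient.mk_surjective _ x
      simp only [LinearMap.mem_ker, LinearMap.prod_apply, Function.prod, Submodule.mapQ_apply,
        LinearMap.lsmul_apply, smul_eq_mul, LinearMap.sub_apply, LinearMap.fst_apply,
        LinearMap.comp_apply, LinearMap.snd_apply, LinearMap.id_coe, id_eq, Prod.mk_eq_zero]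
      constructor
      · rw [sub_self]
      · rw [Submodule.Quotient.mk_eq_zero, Ideal.mem_span_singleton]
        exact Dvd.dvd.mul_right dvd_rfl X
    · rintro ⟨a, b⟩ hab
      obtain ⟨A, rfl⟩ := Submodule.Quotient.mk_surjective _ a
      obtain ⟨B, rfl⟩ := Submodule.Quotient.mk_surjective _ b
      simp only [LinearMap.mem_ker, LinearMap.prod_apply, Function.prod, LinearMap.sub_apply,
        LinearMap.fst_apply, LinearMap.comp_apply, LinearMap.snd_apply, Submodule.mapQ_apply,
        LinearMap.id_coe, id_eq, Prod.mk_eq_zero, ← Submodule.Quotient.mk_sub,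
        Submodule.Quotient.mk_eq_zero] at hab
      obtain ⟨h_ab, hB⟩ := hab
      rw [Ideal.mem_span_singleton] at hB
      obtain ⟨Cc, hC⟩ := hB
      refine ⟨Submodule.Quotient.mk Cc, ?_⟩
      simp only [LinearMap.prod_apply, Function.prod, Submodule.mapQ_apply, LinearMap.lsmul_apply,
        smul_eq_mul]
      refine Prod.ext ?_ ?_
      · rw [Submodule.Quotient.eq]
        have haux : π * Cc - A = -(A - B) := by rw [hC]; ring
        rw [haux]
        exact neg_mem h_ab
      · rw [← hC]
end

section
/- Let R be a principal ideal domain, π a prime element of R, r ≥ 2 an integer, and G any finitely generated R-module. If a 2-3 subcategory C of finitely generated R-modules contains R/(π^r) ⊕ G, then C contains R/(π^{r-1}) ⊕ R/(π) ⊕ G. -/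
open TensorProduct

universe u

open Submodule LinearMap

section Aux

variable {R : Type u} [CommRing R] [IsDomain R]

/-- multiplication-by-`π^k` map between quotients. -/
def mulQ (π : R) (k a b : ℕ) (h : b ≤ k + a) :
    (R ⧸ Ideal.span {π ^ a}) →ₗ[R] (R ⧸ Ideal.span {π ^ b}) :=
  Submodule.mapQ _ _ (LinearMap.lsmul R R (π ^ k)) (by
    intro x hx
    simp only [Submodule.mem_comap, LinearMap.lsmul_apply, smul_eq_mul,
      Ideal.mem_span_singleton] at hx ⊢
    exact dvd_trans (pow_dvd_pow π h) (by rw [pow_add]; exact mul_dvd_mul_left _ hx))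

@[simp] lemma mulQ_mk (π : R) (k a b : ℕ) (h : b ≤ k + a) (x : R) :
    mulQ π k a b h (Submodule.Quotient.mk x) = Submodule.Quotient.mk (π ^ k * x) := rfl

@[simp] lemma mulQ_mk' (π : R) (k a b : ℕ) (h : b ≤ k + a) (x : R) :
    mulQ π k a b h (Ideal.Quotient.mk (Ideal.span {π ^ a}) x)
      = Ideal.Quotient.mk (Ideal.span {π ^ b}) (π ^ k * x) := rfl

lemma range_prodMap' {M M₂ M₃ M₄ : Type u} [AddCommGroup M] [AddCommGroup M₂]
    [AddCommGroup M₃] [AddCommGroup M₄] [Module R M] [Module R M₂] [Module R M₃] [Module R M₄]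
    (f : M →ₗ[R] M₂) (g : M₃ →ₗ[R] M₄) :
    range (LinearMap.prodMap f g) = (range f).prod (range g) := by
  ext ⟨a, b⟩
  simp only [LinearMap.mem_range, Submodule.mem_prod, LinearMap.prodMap_apply, Prod.ext_iff,
    Prod.exists]
  exact ⟨fun ⟨x, y, hx, hy⟩ => ⟨⟨x, hx⟩, ⟨y, hy⟩⟩, fun ⟨⟨x, hx⟩, ⟨y, hy⟩⟩ => ⟨x, y, hx, hy⟩⟩

end Aux

section Main

variable {R : Type u} [CommRing R] [IsDomain R]

set_option linter.unusedSectionVars false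

lemma fin_quot (π : R) (t : ℕ) : Module.Finite R (R ⧸ Ideal.span {π ^ t}) :=
  Module.Finite.of_surjective (Submodule.mkQ _) (Submodule.mkQ_surjective _)

theorem aux_step (π : R) (hπ : Prime π) (s : ℕ)
    (G : Type u) [AddCommGroup G] [Module R G] (hG : Module.Finite R G)
    (𝒞 : ModuleClass R) (h : IsTwoThreeSubcategory R 𝒞)
    (hmem : 𝒞 ((R ⧸ Ideal.span {π ^ (s + 1)}) × G)) :
    𝒞 (((R ⧸ Ideal.span {π ^ 1}) × (R ⧸ Ideal.span {π ^ s})) × G) := by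
  obtain ⟨hfin, hiso, hses⟩ := h
  haveI := fin_quot π (s+1); haveI := fin_quot π (s+2); haveI := fin_quot π s
  haveI := fin_quot π 1
  -- cyclic part of the first short exact sequence
  set f1 : (R ⧸ Ideal.span {π ^ (s+1)}) →ₗ[R]
      ((R ⧸ Ideal.span {π ^ (s+2)}) × (R ⧸ Ideal.span {π ^ s})) :=
    LinearMap.prod (mulQ π 1 (s+1) (s+2) (by omega)) (mulQ π 0 (s+1) s (by omega)) with hf1
  set g1 : ((R ⧸ Ideal.span {π ^ (s+2)}) × (R ⧸ Ideal.span {π ^ s})) →ₗ[R]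
      (R ⧸ Ideal.span {π ^ (s+1)}) :=
    (mulQ π 0 (s+2) (s+1) (by omega)) ∘ₗ (LinearMap.fst R _ _)
      - (mulQ π 1 s (s+1) (by omega)) ∘ₗ (LinearMap.snd R _ _) with hg1
  have inj1 : Function.Injective f1 := by
    rw [injective_iff_map_eq_zero]
    intro x hx
    obtain ⟨x, rfl⟩ := Submodule.Quotient.mk_surjective _ x
    rw [hf1] at hx
    simp only [LinearMap.prod_apply, Function.prod, mulQ_mk, Prod.mk_eq_zero,
      Submodule.Quotient.mk_eq_zero, Ideal.mem_span_singleton, pow_one, pow_zero,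
      one_mul] at hx
    obtain ⟨h1, h2⟩ := hx
    obtain ⟨y, rfl⟩ := h2
    rw [Submodule.Quotient.mk_eq_zero, Ideal.mem_span_singleton]
    have : π ^ (s+1) * π ∣ π ^ (s+1) * y := by
      have : π * (π ^ s * y) = π ^ (s+1) * y := by ring
      rw [← this]
      convert h1 using 2
      ring
    rw [mul_dvd_mul_iff_left (pow_ne_zero _ hπ.ne_zero)] at this
    obtain ⟨z, rfl⟩ := this
    exact ⟨z, by ring⟩
  have surj1 : Function.Surjective g1 := by
    intro y
    obtain ⟨y, rfl⟩ := Submodule.Quotient.mk_surjective _ y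
    refine ⟨(Submodule.Quotient.mk y, 0), ?_⟩
    rw [hg1]
    simp only [LinearMap.sub_apply, LinearMap.coe_comp, Function.comp_apply,
      LinearMap.fst_apply, LinearMap.snd_apply, mulQ_mk, map_zero, sub_zero, pow_zero, one_mul]
  have rng1 : LinearMap.range f1 = LinearMap.ker g1 := by
    ext z
    obtain ⟨a, b⟩ := z
    obtain ⟨a, rfl⟩ := Submodule.Quotient.mk_surjective _ a
    obtain ⟨b, rfl⟩ := Submodule.Quotient.mk_surjective _ b
    rw [LinearMap.mem_ker, hg1]
    simp only [LinearMap.sub_apply, LinearMap.coe_comp, Function.comp_apply,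
      LinearMap.fst_apply, LinearMap.snd_apply, mulQ_mk, pow_zero, one_mul, pow_one]
    rw [← Submodule.Quotient.mk_sub, Submodule.Quotient.mk_eq_zero, Ideal.mem_span_singleton]
    constructor
    · rintro ⟨x, hx⟩
      obtain ⟨x, rfl⟩ := Submodule.Quotient.mk_surjective _ x
      rw [hf1] at hx
      simp only [LinearMap.prod_apply, Function.prod, mulQ_mk, pow_one, pow_zero, one_mul,
        Prod.mk.injEq] at hx
      obtain ⟨h1, h2⟩ := hx
      rw [Submodule.Quotient.eq, Ideal.mem_span_singleton] at h1 h2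
      obtain ⟨c, hc⟩ := h1
      obtain ⟨d, hd⟩ := h2
      exact ⟨d - π * c, by linear_combination π * hd - hc⟩
    · rintro ⟨c, hc⟩
      refine ⟨Submodule.Quotient.mk (b + π ^ s * c), ?_⟩
      rw [hf1]
      simp only [LinearMap.prod_apply, Function.prod, mulQ_mk, pow_one, pow_zero, one_mul]
      rw [Prod.mk.injEq]
      constructor
      · rw [Submodule.Quotient.eq, Ideal.mem_span_singleton]
        exact ⟨0, by linear_combination -hc⟩
      · rw [Submodule.Quotient.eq, Ideal.mem_span_singleton]
        exact ⟨c, by ring⟩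
  -- cyclic part of the second short exact sequence
  set f2 : ((R ⧸ Ideal.span {π ^ 1}) × (R ⧸ Ideal.span {π ^ s})) →ₗ[R]
      ((R ⧸ Ideal.span {π ^ (s+2)}) × (R ⧸ Ideal.span {π ^ s})) :=
    LinearMap.prodMap (mulQ π (s+1) 1 (s+2) (by omega)) LinearMap.id with hf2
  set g2 : ((R ⧸ Ideal.span {π ^ (s+2)}) × (R ⧸ Ideal.span {π ^ s})) →ₗ[R]
      (R ⧸ Ideal.span {π ^ (s+1)}) :=
    (mulQ π 0 (s+2) (s+1) (by omega)) ∘ₗ (LinearMap.fst R _ _) with hg2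
  have inj2 : Function.Injective f2 := by
    rw [hf2, LinearMap.coe_prodMap]
    refine Function.Injective.prodMap ?_ (fun x y hxy => hxy)
    rw [injective_iff_map_eq_zero]
    intro x hx
    obtain ⟨x, rfl⟩ := Submodule.Quotient.mk_surjective _ x
    simp only [mulQ_mk, Submodule.Quotient.mk_eq_zero, Ideal.mem_span_singleton] at hx ⊢
    obtain ⟨y, hy⟩ := hx
    have : π ^ (s+1) * x = π ^ (s+1) * (π * y) := by
      rw [hy]; ring
    rw [mul_left_cancel₀ (pow_ne_zero _ hπ.ne_zero) this, pow_one]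
    exact ⟨y, rfl⟩
  have surj2 : Function.Surjective g2 := by
    intro y
    obtain ⟨y, rfl⟩ := Submodule.Quotient.mk_surjective _ y
    refine ⟨(Submodule.Quotient.mk y, 0), ?_⟩
    rw [hg2]
    simp only [LinearMap.coe_comp, Function.comp_apply, LinearMap.fst_apply, mulQ_mk,
      pow_zero, one_mul]
  have rng2 : LinearMap.range f2 = LinearMap.ker g2 := by
    ext z
    obtain ⟨a, b⟩ := z
    obtain ⟨a, rfl⟩ := Submodule.Quotient.mk_surjective _ a
    rw [LinearMap.mem_ker, hg2]
    simp only [LinearMap.coe_comp, Function.comp_apply, LinearMap.fst_apply, mulQ_mk,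
      pow_zero, one_mul, Submodule.Quotient.mk_eq_zero, Ideal.mem_span_singleton]
    constructor
    · rintro ⟨⟨x, y⟩, hx⟩
      obtain ⟨x, rfl⟩ := Submodule.Quotient.mk_surjective _ x
      rw [hf2] at hx
      simp only [LinearMap.prodMap_apply, LinearMap.id_apply, mulQ_mk, Prod.mk.injEq] at hx
      obtain ⟨h1, _⟩ := hx
      rw [Submodule.Quotient.eq, Ideal.mem_span_singleton] at h1
      obtain ⟨c, hc⟩ := h1
      exact ⟨x - π * c, by linear_combination -hc⟩
    · rintro ⟨c, hc⟩
      refine ⟨(Submodule.Quotient.mk c, b), ?_⟩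
      rw [hf2]
      simp only [LinearMap.prodMap_apply, LinearMap.id_apply, mulQ_mk]
      rw [Prod.mk.injEq]
      exact ⟨by rw [hc], rfl⟩
  -- full sequences, with `G` attached
  set F1 := LinearMap.prodMap f1 (LinearMap.inl R G G) with hF1
  set G1 := LinearMap.prodMap g1 (LinearMap.snd R G G) with hG1
  set F2 := LinearMap.prodMap f2 (LinearMap.inl R G G) with hF2
  set G2 := LinearMap.prodMap g2 (LinearMap.snd R G G) with hG2
  have injF1 : Function.Injective F1 := by
    rw [hF1, LinearMap.coe_prodMap]
    exact Function.Injective.prodMap inj1 LinearMap.inl_injective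
  have surjG1 : Function.Surjective G1 := by
    rw [hG1, LinearMap.coe_prodMap]
    exact Function.Surjective.prodMap surj1 LinearMap.snd_surjective
  have rngF1 : LinearMap.range F1 = LinearMap.ker G1 := by
    rw [hF1, hG1, range_prodMap', LinearMap.ker_prodMap, rng1, LinearMap.range_inl]
  have injF2 : Function.Injective F2 := by
    rw [hF2, LinearMap.coe_prodMap]
    exact Function.Injective.prodMap inj2 LinearMap.inl_injective
  have surjG2 : Function.Surjective G2 := by
    rw [hG2, LinearMap.coe_prodMap]
    exact Function.Surjective.prodMap surj2 LinearMap.snd_surjective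
  have rngF2 : LinearMap.range F2 = LinearMap.ker G2 := by
    rw [hF2, hG2, range_prodMap', LinearMap.ker_prodMap, rng2, LinearMap.range_inl]
  have hM : 𝒞 (((R ⧸ Ideal.span {π ^ (s+2)}) × (R ⧸ Ideal.span {π ^ s})) × (G × G)) :=
    (hses _ _ _ inferInstance inferInstance inferInstance F1 G1 injF1 surjG1 rngF1).2.1
      hmem hmem
  have hA2 : 𝒞 (((R ⧸ Ideal.span {π ^ 1}) × (R ⧸ Ideal.span {π ^ s})) × G) :=
    (hses _ _ _ inferInstance inferInstance inferInstance F2 G2 injF2 surjG2 rngF2).2.2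
      hM hmem
  exact hA2

end Main

/-- over a PID, if a 2-3 subcategory contains `R/(π^r) ⊕ G` (with `π`
prime, `r ≥ 2`, `G` finitely generated), then it contains `R/(π^(r-1)) ⊕ R/(π) ⊕ G`. -/
theorem twoThree_lower_top_order (R : Type u) [CommRing R] [IsDomain R]
    [IsPrincipalIdealRing R] (π : R) (hπ : Prime π) (r : ℕ) (hr : 2 ≤ r)
    (G : Type u) [AddCommGroup G] [Module R G] (hG : Module.Finite R G)
    (𝒞 : ModuleClass R) (h : IsTwoThreeSubcategory R 𝒞)
    (hmem : 𝒞 ((R ⧸ Ideal.span {π ^ r}) × G)) :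
    𝒞 ((R ⧸ Ideal.span {π ^ (r - 1)}) × ((R ⧸ Ideal.span {π}) × G)) := by
  obtain ⟨t, rfl⟩ : ∃ t, r = t + 2 := ⟨r - 2, by omega⟩
  have key := aux_step π hπ (t + 1) G hG 𝒞 h hmem
  have h21 : t + 2 - 1 = t + 1 := rfl
  rw [h21]
  obtain ⟨-, hiso, -⟩ := h
  refine hiso _ _ ?_ key
  have e1 : (R ⧸ Ideal.span {π ^ 1}) ≃ₗ[R] (R ⧸ Ideal.span {π}) :=
    Submodule.quotEquivOfEq _ _ (by rw [pow_one])
  have e2 : (((R ⧸ Ideal.span {π ^ 1}) × (R ⧸ Ideal.span {π ^ (t + 1)})) × G) ≃ₗ[R]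
      ((R ⧸ Ideal.span {π ^ (t + 1)}) × ((R ⧸ Ideal.span {π}) × G)) := by
    have eA : (((R ⧸ Ideal.span {π ^ 1}) × (R ⧸ Ideal.span {π ^ (t + 1)})) × G) ≃ₗ[R]
        (((R ⧸ Ideal.span {π ^ (t + 1)}) × (R ⧸ Ideal.span {π ^ 1})) × G) :=
      LinearEquiv.prodCongr (LinearEquiv.prodComm R _ _) (LinearEquiv.refl R G)
    have eB : (((R ⧸ Ideal.span {π ^ (t + 1)}) × (R ⧸ Ideal.span {π ^ 1})) × G) ≃ₗ[R]
        ((R ⧸ Ideal.span {π ^ (t + 1)}) × ((R ⧸ Ideal.span {π ^ 1}) × G)) :=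
      LinearEquiv.prodAssoc R _ _ _
    have eC : ((R ⧸ Ideal.span {π ^ (t + 1)}) × ((R ⧸ Ideal.span {π ^ 1}) × G)) ≃ₗ[R]
        ((R ⧸ Ideal.span {π ^ (t + 1)}) × ((R ⧸ Ideal.span {π}) × G)) :=
      LinearEquiv.prodCongr (LinearEquiv.refl R _)
        (LinearEquiv.prodCongr e1 (LinearEquiv.refl R G))
    exact eA.trans (eB.trans eC)
  exact e2
end

section
/- Let R be a principal ideal domain, p = (π) a nonzero prime ideal of R, and let C be a 2-3 subcategory of finitely generated R-modules. If C contains a finitely generated p-torsion module M with χ_p(M) = l, then C contains the direct sum (R/(π))^l of l copies of R/(π). -/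
open TensorProduct

universe u

open Order
set_option linter.unusedSectionVars false


section KrullDim
variable {α : Type*} [Preorder α]

lemma myKrull_le_of_forall {n : ℕ} [Nonempty α] (h : ∀ p : LTSeries α, p.length ≤ n) :
    Order.krullDim α ≤ (n : WithBot ℕ∞) := by
  rw [Order.krullDim_eq_iSup_length]
  exact_mod_cast iSup_le fun p => by exact_mod_cast h p

lemma exists_ltSeries_of_krullDim_eq [Nonempty α] {n : ℕ}
    (h : Order.krullDim α = (n : WithBot ℕ∞)) :
    ∃ p : LTSeries α, p.length = n := by
  by_contra hc
  push_neg at hc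
  have h1 : ∀ p : LTSeries α, p.length ≤ n := fun p => by
    have := LTSeries.length_le_krullDim p
    rw [h] at this
    exact_mod_cast this
  cases n with
  | zero => exact hc (RelSeries.singleton _ (Classical.arbitrary α)) rfl
  | succ m =>
    have h2 : ∀ p : LTSeries α, p.length ≤ m := fun p =>
      Nat.lt_succ_iff.mp (lt_of_le_of_ne (h1 p) (hc p))
    have := myKrull_le_of_forall h2
    rw [h] at this
    have : (m + 1 : ℕ) ≤ (m : ℕ) := by exact_mod_cast this
    omega

end KrullDim

section SES
variable {A : Type u} [CommRing A]
variable {M N P : Type u} [AddCommGroup M] [Module A M] [AddCommGroup N] [Module A N]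
  [AddCommGroup P] [Module A P]
variable (f : M →ₗ[A] N) (g : N →ₗ[A] P)

lemma step_dichotomy (hfg : LinearMap.range f = LinearMap.ker g)
    {s t : Submodule A N} (hst : s < t) :
    Submodule.comap f s < Submodule.comap f t ∨ Submodule.map g s < Submodule.map g t := by
  by_contra hcon
  push_neg at hcon
  obtain ⟨h1, h2⟩ := hcon
  have e1 : Submodule.comap f s = Submodule.comap f t :=
    le_antisymm (Submodule.comap_mono hst.le) (by
      by_contra h3
      exact h1 (lt_of_le_of_ne (Submodule.comap_mono hst.le) (fun h => h3 h.ge)))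
  have e2 : Submodule.map g s = Submodule.map g t :=
    le_antisymm (Submodule.map_mono hst.le) (by
      by_contra h3
      exact h2 (lt_of_le_of_ne (Submodule.map_mono hst.le) (fun h => h3 h.ge)))
  refine hst.ne (le_antisymm hst.le ?_)
  intro x hx
  have : g x ∈ Submodule.map g s := by rw [e2]; exact ⟨x, hx, rfl⟩
  obtain ⟨y, hy, hgy⟩ := this
  have hker : x - y ∈ LinearMap.ker g := by
    simp [LinearMap.mem_ker, map_sub, hgy]
  rw [← hfg] at hker
  obtain ⟨z, hz⟩ := hker
  have hzt : z ∈ Submodule.comap f t := by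
    simp only [Submodule.mem_comap, hz]
    exact sub_mem hx (hst.le hy)
  rw [← e1] at hzt
  have : f z ∈ s := hzt
  rw [hz] at this
  have := add_mem this hy
  simpa using this

lemma chain_split (hfg : LinearMap.range f = LinearMap.ker g) :
    ∀ (n : ℕ) (u : LTSeries (Submodule A N)), u.length = n →
    ∃ (v : LTSeries (Submodule A M)) (w : LTSeries (Submodule A P)),
      v.last ≤ Submodule.comap f u.last ∧ w.last ≤ Submodule.map g u.last ∧
      n ≤ v.length + w.length := by
  intro n
  induction n with
  | zero =>
    intro u _
    exact ⟨RelSeries.singleton _ (Submodule.comap f u.last),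
      RelSeries.singleton _ (Submodule.map g u.last), le_refl _, le_refl _, by simp⟩
  | succ m ih =>
    intro u hu
    have hlast : u.eraseLast.last < u.last :=
      u.eraseLast_last_rel_last (by omega)
    obtain ⟨v, w, hv, hw, hlen⟩ := ih u.eraseLast (by simp [hu])
    rcases step_dichotomy f g hfg hlast with hd | hd
    · refine ⟨v.snoc (Submodule.comap f u.last) (lt_of_le_of_lt hv hd), w,
        RelSeries.last_snoc _ _ _ ▸ le_refl _, le_trans hw (Submodule.map_mono hlast.le), ?_⟩
      rw [RelSeries.snoc_length]
      omega
    · refine ⟨v, w.snoc (Submodule.map g u.last) (lt_of_le_of_lt hw hd),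
        le_trans hv (Submodule.comap_mono hlast.le), RelSeries.last_snoc _ _ _ ▸ le_refl _, ?_⟩
      rw [RelSeries.snoc_length]
      omega

lemma krullDim_submodule_of_ses (hf : Function.Injective f) (hg : Function.Surjective g)
    (hfg : LinearMap.range f = LinearMap.ker g) (a c : ℕ)
    (ha : Order.krullDim (Submodule A M) = (a : WithBot ℕ∞))
    (hc : Order.krullDim (Submodule A P) = (c : WithBot ℕ∞)) :
    Order.krullDim (Submodule A N) = ((a + c : ℕ) : WithBot ℕ∞) := by
  apply le_antisymm
  · apply myKrull_le_of_forall
    intro p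
    obtain ⟨v, w, _, _, hlen⟩ := chain_split f g hfg p.length p rfl
    have hv : v.length ≤ a := by
      have := LTSeries.length_le_krullDim v
      rw [ha] at this; exact_mod_cast this
    have hw : w.length ≤ c := by
      have := LTSeries.length_le_krullDim w
      rw [hc] at this; exact_mod_cast this
    omega
  · obtain ⟨v, hvlen⟩ := exists_ltSeries_of_krullDim_eq ha
    obtain ⟨w, hwlen⟩ := exists_ltSeries_of_krullDim_eq hc
    have hmapstrict : StrictMono (Submodule.map f) := fun s t hst => by
      refine lt_of_le_of_ne (Submodule.map_mono hst.le) fun h => hst.ne ?_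
      exact Submodule.map_injective_of_injective hf h
    have hcomapstrict : StrictMono (Submodule.comap g) := fun s t hst => by
      refine lt_of_le_of_ne (Submodule.comap_mono hst.le) fun h => hst.ne ?_
      exact Submodule.comap_injective_of_surjective hg h
    cases c with
    | zero =>
      have := LTSeries.length_le_krullDim (LTSeries.map v (Submodule.map f) hmapstrict)
      simpa [hvlen] using this
    | succ m =>
      have hwlen' : w.length ≠ 0 := by omega
      set p1 : LTSeries (Submodule A N) := LTSeries.map v (Submodule.map f) hmapstrict with hp1
      set p2 : LTSeries (Submodule A N) :=
        LTSeries.map (w.tail hwlen') (Submodule.comap g) hcomapstrict with hp2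
      have hone : (1 : Fin (w.length + 1)) = ⟨1, by omega⟩ := by
        ext
        simp [Fin.val_one']
        omega
      have hw01 : w.head < w 1 := by
        apply w.strictMono
        rw [hone]
        simp [RelSeries.head, Fin.lt_def]
      have hconn : p1.last < p2.head := by
        have h2 : p2.head = Submodule.comap g (w 1) := by
          rw [hp2, LTSeries.head_map, RelSeries.head_tail]
        have h1 : p1.last ≤ LinearMap.range f := by
          rw [hp1, LTSeries.last_map]
          exact LinearMap.map_le_range
        refine lt_of_le_of_ne ?_ ?_
        · rw [h2]
          refine le_trans h1 ?_
          rw [hfg]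
          intro x hx
          simp only [Submodule.mem_comap]
          have : g x = 0 := hx
          rw [this]
          exact (w 1).zero_mem
        · intro heq
          have hle : Submodule.comap g (w 1) ≤ LinearMap.ker g := by
            rw [h2] at heq
            rw [← heq, ← hfg]
            exact h1
          have : w 1 = ⊥ := by
            have := Submodule.map_comap_eq_of_surjective hg (w 1)
            rw [← this]
            apply le_bot_iff.mp
            intro y hy
            obtain ⟨x, hx, rfl⟩ := hy
            exact hle hx
          rw [this] at hw01
          exact (not_lt_bot hw01)
      have := LTSeries.length_le_krullDim (p1.append p2 hconn)
      have hlen2 : (p1.append p2 hconn).length = a + (m + 1) := by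
        have e1 : p1.length = v.length := rfl
        have e2 : p2.length = w.length - 1 := rfl
        rw [RelSeries.append_length, e1, e2, hvlen, hwlen]
        omega
      rw [hlen2] at this
      exact_mod_cast this


lemma prime_pow_dvd_pow_iff {B : Type u} [CommRing B] [IsDomain B] {ϖ : B} (hϖ : Prime ϖ)
    {i j : ℕ} : ϖ ^ i ∣ ϖ ^ j ↔ i ≤ j := by
  constructor
  · intro hd
    by_contra hij
    push_neg at hij
    obtain ⟨c, hc⟩ := hd
    have h1 : ϖ ^ j * 1 = ϖ ^ j * (ϖ ^ (i - j) * c) := by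
      rw [mul_one, ← mul_assoc, ← pow_add]
      rw [show j + (i - j) = i by omega]
      exact hc
    have h2 : (1 : B) = ϖ ^ (i - j) * c :=
      mul_left_cancel₀ (pow_ne_zero _ hϖ.ne_zero) h1
    have : ϖ ∣ 1 := by
      refine dvd_trans (dvd_pow_self ϖ (by omega : i - j ≠ 0)) ⟨c, h2⟩
    exact hϖ.not_unit (isUnit_of_dvd_one this)
  · exact fun h => pow_dvd_pow ϖ h

lemma krullDim_quotient_span_pow {B : Type u} [CommRing B] [IsDomain B] {ϖ : B} (hϖ : Prime ϖ)
    (a : ℕ) (hJ : ∀ J : Ideal B, Ideal.span {ϖ ^ a} ≤ J → ∃ k, k ≤ a ∧ J = Ideal.span {ϖ ^ k}) :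
    Order.krullDim (Submodule B (B ⧸ Ideal.span {ϖ ^ a})) = ((a : ℕ) : WithBot ℕ∞) := by
  rw [Order.krullDim_eq_of_orderIso (Submodule.comapMkQRelIso (Ideal.span {ϖ ^ a}))]
  haveI : Nonempty {p' : Submodule B B // Ideal.span {ϖ ^ a} ≤ p'} :=
    ⟨⟨Ideal.span {ϖ ^ a}, le_refl _⟩⟩
  have hdeg : ∀ p' : {p' : Submodule B B // Ideal.span {ϖ ^ a} ≤ p'},
      ∃ k, k ≤ a ∧ p'.1 = Ideal.span {ϖ ^ k} := fun p' => hJ p'.1 p'.2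
  apply le_antisymm
  · apply myKrull_le_of_forall
    intro p
    have key : ∀ i : Fin (p.length + 1), ∃ k, k ≤ a ∧ (p i).1 = Ideal.span {ϖ ^ k} :=
      fun i => hdeg (p i)
    choose deg hdegle hdegeq using key
    have hanti : ∀ i j : Fin (p.length + 1), i < j → deg j < deg i := by
      intro i j hij
      have hlt : (p i).1 < (p j).1 := p.strictMono hij
      have hle : ϖ ^ (deg j) ∣ ϖ ^ (deg i) := by
        rw [← Ideal.span_singleton_le_span_singleton, ← hdegeq i, ← hdegeq j]
        exact hlt.le
      have : deg j ≤ deg i := (prime_pow_dvd_pow_iff hϖ).mp hle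
      rcases lt_or_eq_of_le this with h | h
      · exact h
      · exfalso
        apply hlt.ne
        rw [hdegeq i, hdegeq j, h]
    have hinj : Function.Injective (fun i : Fin (p.length + 1) => (⟨a - deg i, by
        have := hdegle i; omega⟩ : Fin (a + 1))) := by
      intro i j hij
      simp only [Fin.mk.injEq] at hij
      rcases lt_trichotomy i j with h | h | h
      · have := hanti i j h; have hi := hdegle i; have hj := hdegle j; omega
      · exact h
      · have := hanti j i h; have hi := hdegle i; have hj := hdegle j; omega
    have := Fintype.card_le_of_injective _ hinj
    simpa using this
  · have hseries : ∀ i : Fin (a + 1),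
        Ideal.span {ϖ ^ a} ≤ Ideal.span {ϖ ^ (a - i.1)} := fun i =>
      Ideal.span_singleton_le_span_singleton.mpr (pow_dvd_pow ϖ (by omega))
    let p : LTSeries {p' : Submodule B B // Ideal.span {ϖ ^ a} ≤ p'} :=
      ⟨a, fun i => ⟨Ideal.span {ϖ ^ (a - i.1)}, hseries i⟩, by
        intro i
        have hc : (i.castSucc).1 = i.1 := rfl
        have hs : (i.succ).1 = i.1 + 1 := rfl
        have hi2 := i.2
        simp only [hc, hs]
        have h1 : ϖ ^ (a - (i.1 + 1)) ∣ ϖ ^ (a - i.1) :=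
          (prime_pow_dvd_pow_iff hϖ).mpr (by omega)
        refine lt_of_le_of_ne (Ideal.span_singleton_le_span_singleton.mpr h1) ?_
        intro heq
        have hji : ϖ ^ (a - i.1) ∣ ϖ ^ (a - (i.1 + 1)) := by
          rw [← Ideal.span_singleton_le_span_singleton]
          have heq : Ideal.span {ϖ ^ (a - i.1)} = Ideal.span {ϖ ^ (a - (i.1 + 1))} := by simpa using heq
          rw [heq]
        have := (prime_pow_dvd_pow_iff hϖ).mp hji
        omega⟩
    have := LTSeries.length_le_krullDim p
    exact_mod_cast this

lemma krullDim_submodule_subsingleton {A : Type u} [CommRing A] {T : Type u} [AddCommGroup T]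
    [Module A T] [Subsingleton T] :
    Order.krullDim (Submodule A T) = ((0 : ℕ) : WithBot ℕ∞) := by
  haveI : Unique (Submodule A T) :=
    ⟨⟨⊥⟩, fun S => by
      ext x
      rw [Subsingleton.elim x 0]
      simp⟩
  simpa using Order.krullDim_eq_zero_of_unique

lemma krullDim_submodule_prod {A : Type u} [CommRing A] {X Y : Type u} [AddCommGroup X]
    [Module A X] [AddCommGroup Y] [Module A Y] (x y : ℕ)
    (hx : Order.krullDim (Submodule A X) = ((x : ℕ) : WithBot ℕ∞))
    (hy : Order.krullDim (Submodule A Y) = ((y : ℕ) : WithBot ℕ∞)) :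
    Order.krullDim (Submodule A (X × Y)) = ((x + y : ℕ) : WithBot ℕ∞) :=
  krullDim_submodule_of_ses (LinearMap.inl A X Y) (LinearMap.snd A X Y)
    (LinearMap.inl_injective) (LinearMap.snd_surjective)
    (LinearMap.range_inl A X Y) x y hx hy


section Alg
variable {R : Type u} [CommRing R] [IsDomain R] (π : R)

/-- `R ⧸ (π^a)`. -/
abbrev Qmod (a : ℕ) : Type u := R ⧸ Ideal.span {π ^ a}

instance QmodFinite (a : ℕ) : Module.Finite R (Qmod π a) :=
  Module.Finite.of_surjective (Ideal.span {π ^ a}).mkQ (Submodule.mkQ_surjective _)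

/-- Multiplication by `c` as a map `R/(π^a) → R/(π^b)`, when `π^b ∣ c * π^a`. -/
def smulQ (c : R) {a b : ℕ} (hc : π ^ b ∣ c * π ^ a) : Qmod π a →ₗ[R] Qmod π b :=
  Submodule.mapQ _ _ (LinearMap.lsmul R R c) (by
    rw [Ideal.span_le]
    intro x hx
    rw [Set.mem_singleton_iff] at hx
    subst hx
    show (LinearMap.lsmul R R c) (π ^ a) ∈ Ideal.span {π ^ b}
    show c • π ^ a ∈ Ideal.span {π ^ b}
    rw [smul_eq_mul]
    exact Ideal.mem_span_singleton.mpr hc)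

lemma smulQ_mk (c : R) {a b : ℕ} (hc : π ^ b ∣ c * π ^ a) (x : R) :
    smulQ π c hc (Submodule.Quotient.mk x) = Submodule.Quotient.mk (c * x) := by
  rw [smulQ, Submodule.mapQ_apply, LinearMap.lsmul_apply, smul_eq_mul]

lemma Qmod_mk_eq_zero {a : ℕ} (x : R) :
    (Submodule.Quotient.mk x : Qmod π a) = 0 ↔ π ^ a ∣ x := by
  rw [Submodule.Quotient.mk_eq_zero]
  exact Ideal.mem_span_singleton

lemma Qmod_mk_eq {a : ℕ} (x y : R) :
    (Submodule.Quotient.mk x : Qmod π a) = Submodule.Quotient.mk y ↔ π ^ a ∣ x - y := by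
  rw [Submodule.Quotient.eq]
  exact Ideal.mem_span_singleton

lemma Qmod_surj {a : ℕ} (y : Qmod π a) : ∃ x : R, Submodule.Quotient.mk x = y :=
  Submodule.Quotient.mk_surjective _ y

section StepMaps
variable (b : ℕ)

lemma hd1 : π ^ (b + 2) ∣ π * π ^ (b + 1) := by
  rw [← pow_succ']

lemma hdred {a a' : ℕ} (h : a ≤ a') : π ^ a ∣ 1 * π ^ a' := by
  rw [one_mul]; exact pow_dvd_pow π h

lemma hdmul : π ^ (b + 1) ∣ π * π ^ b := by
  rw [← pow_succ']

lemma hdgam : π ^ (b + 2) ∣ π ^ (b + 1) * π ^ 1 := by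
  rw [← pow_add]

/-- `x ↦ (πx, x)` from `R/(π^{b+1})` to `R/(π^{b+2}) × R/(π^b)`. -/
def alphaMap : Qmod π (b + 1) →ₗ[R] Qmod π (b + 2) × Qmod π b :=
  LinearMap.prod (smulQ π π (hd1 π b)) (smulQ π 1 (hdred π (Nat.le_succ b)))

/-- `(u, v) ↦ red u - π v` from `R/(π^{b+2}) × R/(π^b)` to `R/(π^{b+1})`. -/
def qMap : (Qmod π (b + 2) × Qmod π b) →ₗ[R] Qmod π (b + 1) :=
  (smulQ π 1 (hdred π (by omega))).comp (LinearMap.fst R _ _)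
    - (smulQ π π (hdmul π b)).comp (LinearMap.snd R _ _)

/-- `v ↦ π^{b+1} v` from `R/(π)` to `R/(π^{b+2})`. -/
def gammaMap : Qmod π 1 →ₗ[R] Qmod π (b + 2) :=
  smulQ π (π ^ (b + 1)) (hdgam π b)

/-- reduction `R/(π^{b+2}) → R/(π^{b+1})`. -/
def rhoMap : Qmod π (b + 2) →ₗ[R] Qmod π (b + 1) :=
  smulQ π 1 (hdred π (by omega))

lemma alphaMap_mk (r : R) :
    alphaMap π b (Submodule.Quotient.mk r) =
      (Submodule.Quotient.mk (π * r), Submodule.Quotient.mk r) := by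
  rw [alphaMap, LinearMap.prod_apply]
  refine Prod.ext ?_ ?_
  · show smulQ π π (hd1 π b) _ = _
    rw [smulQ_mk]
  · show smulQ π 1 (hdred π (Nat.le_succ b)) _ = _
    rw [smulQ_mk, one_mul]

lemma qMap_mk (r s : R) :
    qMap π b (Submodule.Quotient.mk r, Submodule.Quotient.mk s) =
      Submodule.Quotient.mk (r - π * s) := by
  rw [qMap, LinearMap.sub_apply, LinearMap.comp_apply, LinearMap.comp_apply]
  show smulQ π 1 _ (Submodule.Quotient.mk r) - smulQ π π _ (Submodule.Quotient.mk s) = _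
  rw [smulQ_mk, smulQ_mk, one_mul, ← Submodule.Quotient.mk_sub]

lemma gammaMap_mk (r : R) :
    gammaMap π b (Submodule.Quotient.mk r) = Submodule.Quotient.mk (π ^ (b + 1) * r) := by
  rw [gammaMap, smulQ_mk]

lemma rhoMap_mk (r : R) :
    rhoMap π b (Submodule.Quotient.mk r) = Submodule.Quotient.mk r := by
  rw [rhoMap, smulQ_mk, one_mul]

lemma alphaMap_injective (hπ : Prime π) : Function.Injective (alphaMap π b) := by
  rw [← LinearMap.ker_eq_bot, LinearMap.ker_eq_bot']
  intro x hx
  obtain ⟨r, rfl⟩ := Qmod_surj π x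
  rw [alphaMap_mk] at hx
  have h1 : (Submodule.Quotient.mk (π * r) : Qmod π (b + 2)) = 0 := (Prod.ext_iff.mp hx).1
  rw [Qmod_mk_eq_zero] at h1
  rw [show (0 : Qmod π (b+1)) = Submodule.Quotient.mk (0:R) from rfl, Qmod_mk_eq]
  have h2 : π * π ^ (b + 1) ∣ π * r := by rwa [pow_succ'] at h1
  have := (mul_dvd_mul_iff_left hπ.ne_zero).mp h2
  simpa using this

lemma qMap_surjective : Function.Surjective (qMap π b) := by
  intro y
  obtain ⟨r, rfl⟩ := Qmod_surj π y
  refine ⟨(Submodule.Quotient.mk r, Submodule.Quotient.mk 0), ?_⟩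
  rw [qMap_mk]
  congr 1
  ring

lemma range_alphaMap : LinearMap.range (alphaMap π b) = LinearMap.ker (qMap π b) := by
  ext ⟨u, v⟩
  constructor
  · rintro ⟨x, hx⟩
    obtain ⟨r, rfl⟩ := Qmod_surj π x
    rw [alphaMap_mk] at hx
    rw [LinearMap.mem_ker, ← hx, qMap_mk]
    rw [show π * r - π * r = 0 from by ring]
    rfl
  · intro hmem
    rw [LinearMap.mem_ker] at hmem
    obtain ⟨r, rfl⟩ := Qmod_surj π u
    obtain ⟨s, rfl⟩ := Qmod_surj π v
    rw [qMap_mk, Qmod_mk_eq_zero] at hmem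
    obtain ⟨t, ht⟩ := hmem
    refine ⟨Submodule.Quotient.mk (s + π ^ b * t), ?_⟩
    rw [alphaMap_mk]
    have hfst : π * (s + π ^ b * t) = r := by linear_combination -ht
    refine Prod.ext ?_ ?_
    · show (Submodule.Quotient.mk (π * (s + π ^ b * t)) : Qmod π (b+2)) = _
      rw [hfst]
    · show (Submodule.Quotient.mk (s + π ^ b * t) : Qmod π b) = _
      rw [Qmod_mk_eq]
      exact ⟨t, by ring⟩

lemma gammaMap_injective (hπ : Prime π) : Function.Injective (gammaMap π b) := by
  rw [← LinearMap.ker_eq_bot, LinearMap.ker_eq_bot']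
  intro x hx
  obtain ⟨r, rfl⟩ := Qmod_surj π x
  rw [gammaMap_mk, Qmod_mk_eq_zero] at hx
  rw [show (0 : Qmod π 1) = Submodule.Quotient.mk (0:R) from rfl, Qmod_mk_eq]
  have h2 : π ^ (b + 1) * π ^ 1 ∣ π ^ (b + 1) * r := by rw [← pow_add]; exact hx
  have := (mul_dvd_mul_iff_left (pow_ne_zero _ hπ.ne_zero)).mp h2
  simpa using this

lemma rhoMap_surjective : Function.Surjective (rhoMap π b) := by
  intro y
  obtain ⟨r, rfl⟩ := Qmod_surj π y
  exact ⟨Submodule.Quotient.mk r, rhoMap_mk π b r⟩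

lemma ker_rhoMap : LinearMap.ker (rhoMap π b) = LinearMap.range (gammaMap π b) := by
  ext u
  constructor
  · intro hu
    rw [LinearMap.mem_ker] at hu
    obtain ⟨r, rfl⟩ := Qmod_surj π u
    rw [rhoMap_mk, Qmod_mk_eq_zero] at hu
    obtain ⟨t, ht⟩ := hu
    refine ⟨Submodule.Quotient.mk t, ?_⟩
    rw [gammaMap_mk, ← ht]
  · rintro ⟨v, hv⟩
    obtain ⟨s, rfl⟩ := Qmod_surj π v
    rw [LinearMap.mem_ker, ← hv, gammaMap_mk, rhoMap_mk, Qmod_mk_eq_zero]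
    exact ⟨s, rfl⟩

end StepMaps
end Alg

section Equivs
variable {R : Type u} [CommRing R]

/-- Dependent `Fin.cons` linear equivalence. -/
def piSuccLequiv (n : ℕ) (φ : Fin (n+1) → Type u)
    [∀ i, AddCommGroup (φ i)] [∀ i, Module R (φ i)] :
    (∀ i, φ i) ≃ₗ[R] φ 0 × (∀ i : Fin n, φ i.succ) where
  toFun f := (f 0, fun i => f i.succ)
  map_add' _ _ := rfl
  map_smul' _ _ := rfl
  invFun p := Fin.cons p.1 p.2
  left_inv f := by
    show Fin.cons (f 0) (fun i : Fin n => f i.succ) = f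
    funext i
    refine Fin.cases ?_ ?_ i
    · exact Fin.cons_zero _ _
    · intro j; exact Fin.cons_succ _ _ j
  right_inv p := by
    show (Fin.cons p.1 p.2 0, fun i : Fin n => Fin.cons p.1 p.2 i.succ) = p
    refine Prod.ext ?_ ?_
    · show Fin.cons p.1 p.2 0 = p.1
      exact Fin.cons_zero _ _
    · show (fun i : Fin n => Fin.cons p.1 p.2 i.succ) = p.2
      funext j
      exact Fin.cons_succ _ _ j

/-- Dropping a subsingleton factor. -/
def dropSubsingleton (Z W : Type u) [AddCommGroup Z] [Module R Z]
    [AddCommGroup W] [Module R W] [Subsingleton Z] : (Z × W) ≃ₗ[R] W :=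
  LinearEquiv.ofLinear (LinearMap.snd R Z W) (LinearMap.prod 0 LinearMap.id)
    (by apply LinearMap.ext; intro w; rfl)
    (by
      apply LinearMap.ext
      intro x
      exact Prod.ext (Subsingleton.elim _ _) rfl)

/-- `(Fin m → Y) × (Fin k → Y) ≃ (Fin (m+k) → Y)`. -/
def finAppendLequiv (Y : Type u) [AddCommGroup Y] [Module R Y] (m k : ℕ) :
    ((Fin m → Y) × (Fin k → Y)) ≃ₗ[R] (Fin (m + k) → Y) :=
  (LinearEquiv.sumArrowLequivProdArrow (Fin m) (Fin k) R Y).symm ≪≫ₗ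
    LinearEquiv.funCongrLeft R Y finSumFinEquiv.symm

end Equivs

section Step
variable {R : Type u} [CommRing R] [IsDomain R] {π : R}
variable (𝒞 : ModuleClass R) (h23 : IsTwoThreeSubcategory R 𝒞)
lemma cast𝒞 {m m' : ℕ} (hm : m = m') (Y : Type u) [AddCommGroup Y] [Module R Y] :
    𝒞 (Fin m → Y) → 𝒞 (Fin m' → Y) := by subst hm; exact id

include h23

lemma cal_trans {M N : Type u} [AddCommGroup M] [Module R M] [AddCommGroup N] [Module R N]
    (e : M ≃ₗ[R] N) : 𝒞 M → 𝒞 N := h23.2.1 M N e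

lemma step23 (hπ : Prime π) (b : ℕ) (N : Type u) [AddCommGroup N] [Module R N]
    [Module.Finite R N] (hC : 𝒞 (Qmod π (b+1) × N)) :
    𝒞 (Qmod π b × (Qmod π 1 × N)) := by
  let X : Type u := (Qmod π (b+2) × Qmod π b) × (N × N)
  -- SES 1 : 0 → Q(b+1) × N → X → Q(b+1) × N → 0
  let f1 : (Qmod π (b+1) × N) →ₗ[R] X := (alphaMap π b).prodMap (LinearMap.inl R N N)
  let g1 : X →ₗ[R] (Qmod π (b+1) × N) := (qMap π b).prodMap (LinearMap.snd R N N)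
  have hf1 : Function.Injective f1 := by
    rintro ⟨x, n⟩ ⟨y, m⟩ hxy
    have h1 : alphaMap π b x = alphaMap π b y := (Prod.ext_iff.mp hxy).1
    have h2 : LinearMap.inl R N N n = LinearMap.inl R N N m := (Prod.ext_iff.mp hxy).2
    exact Prod.ext (alphaMap_injective π b hπ h1) (LinearMap.inl_injective h2)
  have hg1 : Function.Surjective g1 := by
    rintro ⟨y, n⟩
    obtain ⟨x, hx⟩ := qMap_surjective π b y
    exact ⟨(x, (0, n)), Prod.ext hx rfl⟩
  have hrange1 : LinearMap.range f1 = LinearMap.ker g1 := by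
    ext ⟨uv, nn⟩
    constructor
    · rintro ⟨⟨x, n⟩, hx⟩
      have huv : alphaMap π b x = uv := (Prod.ext_iff.mp hx).1
      have hnn : LinearMap.inl R N N n = nn := (Prod.ext_iff.mp hx).2
      rw [LinearMap.mem_ker]
      refine Prod.ext ?_ ?_
      · show qMap π b uv = 0
        rw [← huv]
        have : alphaMap π b x ∈ LinearMap.ker (qMap π b) := by
          rw [← range_alphaMap]
          exact LinearMap.mem_range_self _ x
        exact this
      · show nn.2 = 0
        rw [← hnn]
        rfl
    · intro hk
      rw [LinearMap.mem_ker] at hk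
      have h1 : qMap π b uv = 0 := (Prod.ext_iff.mp hk).1
      have h2 : nn.2 = 0 := (Prod.ext_iff.mp hk).2
      have : uv ∈ LinearMap.range (alphaMap π b) := by
        rw [range_alphaMap]
        exact h1
      obtain ⟨x, hx⟩ := this
      refine ⟨(x, nn.1), ?_⟩
      refine Prod.ext hx ?_
      show (nn.1, (0 : N)) = nn
      exact Prod.ext rfl h2.symm
  have hX : 𝒞 X :=
    (h23.2.2 _ _ _ inferInstance inferInstance inferInstance f1 g1 hf1 hg1 hrange1).2.1 hC hC
  -- SES 2 : 0 → Q b × (Q 1 × N) → X → Q(b+1) × N → 0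
  let f2 : (Qmod π b × (Qmod π 1 × N)) →ₗ[R] X :=
    LinearMap.prod
      (LinearMap.prod
        ((gammaMap π b).comp
          ((LinearMap.fst R (Qmod π 1) N).comp (LinearMap.snd R (Qmod π b) (Qmod π 1 × N))))
        (LinearMap.fst R (Qmod π b) (Qmod π 1 × N)))
      (LinearMap.prod
        ((LinearMap.snd R (Qmod π 1) N).comp (LinearMap.snd R (Qmod π b) (Qmod π 1 × N))) 0)
  let g2 : X →ₗ[R] (Qmod π (b+1) × N) :=
    LinearMap.prod
      ((rhoMap π b).comp
        ((LinearMap.fst R (Qmod π (b+2)) (Qmod π b)).comp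
          (LinearMap.fst R (Qmod π (b+2) × Qmod π b) (N × N))))
      ((LinearMap.snd R N N).comp (LinearMap.snd R (Qmod π (b+2) × Qmod π b) (N × N)))
  have hf2apply : ∀ (u : Qmod π b) (v : Qmod π 1) (n : N),
      f2 (u, (v, n)) = ((gammaMap π b v, u), (n, 0)) := fun u v n => rfl
  have hg2apply : ∀ (a : Qmod π (b+2)) (y : Qmod π b) (n n' : N),
      g2 ((a, y), (n, n')) = (rhoMap π b a, n') := fun a y n n' => rfl
  have hf2 : Function.Injective f2 := by
    rintro ⟨u, v, n⟩ ⟨u', v', n'⟩ hx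
    rw [hf2apply, hf2apply] at hx
    have e1 : gammaMap π b v = gammaMap π b v' := (Prod.ext_iff.mp (Prod.ext_iff.mp hx).1).1
    have e2 : u = u' := (Prod.ext_iff.mp (Prod.ext_iff.mp hx).1).2
    have e3 : n = n' := (Prod.ext_iff.mp (Prod.ext_iff.mp hx).2).1
    exact Prod.ext e2 (Prod.ext (gammaMap_injective π b hπ e1) e3)
  have hg2 : Function.Surjective g2 := by
    rintro ⟨y, n⟩
    obtain ⟨x, hx⟩ := rhoMap_surjective π b y
    exact ⟨((x, 0), (0, n)), by rw [hg2apply, hx]⟩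
  have hrange2 : LinearMap.range f2 = LinearMap.ker g2 := by
    ext ⟨⟨a, y⟩, ⟨n, n'⟩⟩
    constructor
    · rintro ⟨⟨u, v, m⟩, hx⟩
      rw [hf2apply] at hx
      rw [LinearMap.mem_ker, hg2apply]
      have e1 : gammaMap π b v = a := (Prod.ext_iff.mp (Prod.ext_iff.mp hx).1).1
      have e4 : (0 : N) = n' := (Prod.ext_iff.mp (Prod.ext_iff.mp hx).2).2
      refine Prod.ext ?_ e4.symm
      show rhoMap π b a = 0
      rw [← e1]
      have : gammaMap π b v ∈ LinearMap.ker (rhoMap π b) := by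
        rw [ker_rhoMap]
        exact LinearMap.mem_range_self _ v
      exact this
    · intro hk
      rw [LinearMap.mem_ker, hg2apply] at hk
      have h1 : rhoMap π b a = 0 := (Prod.ext_iff.mp hk).1
      have h2 : n' = 0 := (Prod.ext_iff.mp hk).2
      have : a ∈ LinearMap.range (gammaMap π b) := by
        rw [← ker_rhoMap]
        exact h1
      obtain ⟨v, hv⟩ := this
      refine ⟨(y, (v, n)), ?_⟩
      rw [hf2apply, hv, h2]
  exact (h23.2.2 _ _ _ inferInstance inferInstance inferInstance f2 g2 hf2 hg2 hrange2).2.2 hX hC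

lemma cor23 (hπ : Prime π) (a : ℕ) :
    ∀ (N : Type u) [AddCommGroup N] [Module R N] [Module.Finite R N],
      𝒞 (Qmod π (a+1) × N) → 𝒞 ((Fin (a+1) → Qmod π 1) × N) := by
  induction a with
  | zero =>
    intro N _ _ _ hC
    exact cal_trans 𝒞 h23
      (LinearEquiv.prodCongr (LinearEquiv.funUnique (Fin 1) R (Qmod π 1)).symm
        (LinearEquiv.refl R N)) hC
  | succ a ih =>
    intro N _ _ _ hC
    have h1 : 𝒞 (Qmod π (a+1) × (Qmod π 1 × N)) := step23 𝒞 h23 hπ (a+1) N hC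
    have h2 : 𝒞 ((Fin (a+1) → Qmod π 1) × (Qmod π 1 × N)) := ih (Qmod π 1 × N) h1
    refine cal_trans 𝒞 h23 ?_ h2
    exact (LinearEquiv.prodAssoc R _ _ _).symm ≪≫ₗ
      LinearEquiv.prodCongr
        ((LinearEquiv.prodCongr (LinearEquiv.refl R (Fin (a+1) → Qmod π 1))
            (LinearEquiv.funUnique (Fin 1) R (Qmod π 1)).symm) ≪≫ₗ
          finAppendLequiv (Qmod π 1) (a+1) 1)
        (LinearEquiv.refl R N)

end Step

section DL
variable (R : Type u) [CommRing R] [IsDomain R] (π : R)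

/-- Nested product `R/(π^{a₁}) × (R/(π^{a₂}) × (... × PUnit))`. -/
def DList : List ℕ → Type u
  | [] => PUnit.{u+1}
  | a :: s => Qmod π a × DList s

instance DList.instAddCommGroup : ∀ s : List ℕ, AddCommGroup (DList R π s)
  | [] => inferInstanceAs (AddCommGroup PUnit.{u+1})
  | a :: s =>
    letI := DList.instAddCommGroup s
    inferInstanceAs (AddCommGroup (Qmod π a × DList R π s))

instance DList.instModule : ∀ s : List ℕ, Module R (DList R π s)
  | [] => inferInstanceAs (Module R PUnit.{u+1})
  | a :: s =>
    letI := DList.instModule s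
    inferInstanceAs (Module R (Qmod π a × DList R π s))

instance DList.instFinite : ∀ s : List ℕ, Module.Finite R (DList R π s)
  | [] => inferInstanceAs (Module.Finite R PUnit.{u+1})
  | a :: s =>
    letI := DList.instFinite s
    inferInstanceAs (Module.Finite R (Qmod π a × DList R π s))

instance : Subsingleton (DList R π []) := inferInstanceAs (Subsingleton PUnit.{u+1})

/-- `DList (a :: s)` is definitionally the product. -/
def DList.consEquiv (a : ℕ) (s : List ℕ) :
    DList R π (a :: s) ≃ₗ[R] Qmod π a × DList R π s := LinearEquiv.refl R _

end DL

section Main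
variable {R : Type u} [CommRing R] [IsDomain R] {π : R}
variable (𝒞 : ModuleClass R) (h23 : IsTwoThreeSubcategory R 𝒞)
include h23

lemma main23 (hπ : Prime π) :
    ∀ (s : List ℕ) (k : ℕ), 𝒞 ((Fin k → Qmod π 1) × DList R π s) →
      𝒞 (Fin (k + s.sum) → Qmod π 1) := by
  intro s
  induction s with
  | nil =>
    intro k hC
    refine cast𝒞 𝒞 (show k = k + ([] : List ℕ).sum by simp) _ ?_
    refine cal_trans 𝒞 h23 ?_ hC
    exact (LinearEquiv.prodComm R _ _) ≪≫ₗ dropSubsingleton (DList R π []) _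
  | cons a t ih =>
    intro k hC
    cases a with
    | zero =>
      haveI : Subsingleton (Qmod π 0) := by
        apply Submodule.Quotient.subsingleton_iff.mpr
        rw [pow_zero]
        exact Ideal.span_singleton_one
      have h1 : 𝒞 ((Fin k → Qmod π 1) × DList R π t) := by
        refine cal_trans 𝒞 h23 ?_ hC
        exact LinearEquiv.prodCongr (LinearEquiv.refl R _)
          ((DList.consEquiv R π 0 t) ≪≫ₗ dropSubsingleton (Qmod π 0) (DList R π t))
      have h2 := ih k h1
      refine cast𝒞 𝒞 ?_ _ h2
      rw [List.sum_cons]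
      omega
    | succ b =>
      have h1 : 𝒞 (Qmod π (b+1) × ((Fin k → Qmod π 1) × DList R π t)) := by
        refine cal_trans 𝒞 h23 ?_ hC
        exact (LinearEquiv.prodCongr (LinearEquiv.refl R _) (DList.consEquiv R π (b+1) t)) ≪≫ₗ
          (LinearEquiv.prodComm R _ _) ≪≫ₗ (LinearEquiv.prodAssoc R _ _ _) ≪≫ₗ
          LinearEquiv.prodCongr (LinearEquiv.refl R (Qmod π (b+1))) (LinearEquiv.prodComm R _ _)
      have h2 : 𝒞 ((Fin (b+1) → Qmod π 1) × ((Fin k → Qmod π 1) × DList R π t)) :=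
        cor23 𝒞 h23 hπ b _ h1
      have h3 : 𝒞 ((Fin ((b+1) + k) → Qmod π 1) × DList R π t) := by
        refine cal_trans 𝒞 h23 ?_ h2
        exact (LinearEquiv.prodAssoc R _ _ _).symm ≪≫ₗ
          LinearEquiv.prodCongr (finAppendLequiv (Qmod π 1) (b+1) k) (LinearEquiv.refl R _)
      have h4 := ih ((b+1) + k) h3
      refine cast𝒞 𝒞 ?_ _ h4
      rw [List.sum_cons]
      omega

lemma alg_final (hπ : Prime π) (s : List ℕ) (hC : 𝒞 (DList R π s)) :
    𝒞 (Fin s.sum → Qmod π 1) := by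
  have h0 : 𝒞 ((Fin 0 → Qmod π 1) × DList R π s) := by
    refine cal_trans 𝒞 h23 ?_ hC
    exact (dropSubsingleton (Fin 0 → Qmod π 1) (DList R π s)).symm
  have := main23 𝒞 h23 hπ s 0 h0
  exact cast𝒞 𝒞 (by omega) _ this
end Main

section SubsEquiv
variable {R : Type u} [CommRing R]

/-- Any two subsingleton modules are equivalent. -/
def subsingletonLequiv (Z W : Type u) [AddCommGroup Z] [Module R Z] [AddCommGroup W]
    [Module R W] [Subsingleton Z] [Subsingleton W] : Z ≃ₗ[R] W :=
  LinearEquiv.ofLinear 0 0 (LinearMap.ext fun _ => Subsingleton.elim _ _)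
    (LinearMap.ext fun _ => Subsingleton.elim _ _)

end SubsEquiv

section Decomp
variable {R : Type u} [CommRing R] [IsDomain R] (π : R)

/-- Cast along a list equality. -/
def DListCast {s s' : List ℕ} (h : s = s') : DList R π s ≃ₗ[R] DList R π s' := by
  subst h
  exact LinearEquiv.refl R _

/-- Dependent products of `Qmod`s over `Fin n` are `DList`s. -/
def piQmodToDList : ∀ (n : ℕ) (v : Fin n → ℕ),
    (∀ j, Qmod π (v j)) ≃ₗ[R] DList R π (List.ofFn v)
  | 0, v =>
    haveI : Subsingleton (∀ j : Fin 0, Qmod π (v j)) := ⟨fun a b => by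
      funext j; exact absurd j.2 (by omega)⟩
    haveI : Subsingleton (DList R π (List.ofFn v)) := by
      rw [List.ofFn_zero]
      infer_instance
    subsingletonLequiv _ _
  | n+1, v =>
    (piSuccLequiv n (fun j => Qmod π (v j))) ≪≫ₗ
      (LinearEquiv.prodCongr (LinearEquiv.refl R (Qmod π (v 0)))
        (piQmodToDList n (fun j => v j.succ))) ≪≫ₗ
      (DListCast π (List.ofFn_succ (f := v)).symm)

variable [IsPrincipalIdealRing R] {π}

lemma exists_dlist_iso (hπ : Prime π) (M : Type u) [AddCommGroup M] [Module R M]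
    [Module.Finite R M] (htor : ∀ x : M, ∃ n : ℕ, π ^ n • x = 0) :
    ∃ s : List ℕ, Nonempty (M ≃ₗ[R] DList R π s) := by
  have hT : Module.IsTorsion R M := fun x => by
    obtain ⟨n, hn⟩ := htor x
    exact ⟨⟨π ^ n, mem_nonZeroDivisors_of_ne_zero (pow_ne_zero _ hπ.ne_zero)⟩, hn⟩
  obtain ⟨ι, hfin, p, hp, e, ⟨eq0⟩⟩ := Module.equiv_directSum_of_isTorsion.{u, u} hT
  haveI := hfin
  haveI := Classical.decEq ι
  set e1 : M ≃ₗ[R] ∀ i : ι, R ⧸ (R ∙ (p i ^ e i)) :=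
    eq0.trans (DirectSum.linearEquivFunOnFintype R ι (fun i => R ⧸ (R ∙ (p i ^ e i))))
    with he1
  have hspan : ∀ i : ι, (R ∙ (p i ^ e i)) = Ideal.span {π ^ e i} := by
    intro i
    by_cases he : e i = 0
    · rw [he, pow_zero, pow_zero]
    · -- the cyclic factor is π-power-torsion
      have hmk : ∀ j : ι, R ⧸ (R ∙ (p j ^ e j)) := fun j => Submodule.Quotient.mk 1
      set y : ∀ j : ι, R ⧸ (R ∙ (p j ^ e j)) :=
        Pi.single i (Submodule.Quotient.mk (1 : R)) with hy
      set x : M := e1.symm y with hxdef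
      obtain ⟨n, hn⟩ := htor x
      have h0 : π ^ n • y = 0 := by
        have : e1 (π ^ n • x) = 0 := by rw [hn, map_zero]
        rwa [map_smul, LinearEquiv.apply_symm_apply] at this
      have h1 : (π ^ n • (Submodule.Quotient.mk (1 : R) : R ⧸ (R ∙ (p i ^ e i)))) = 0 := by
        have := congrFun h0 i
        rwa [hy, Pi.smul_apply, Pi.single_eq_same] at this
      rw [← Submodule.Quotient.mk_smul, smul_eq_mul, mul_one, Submodule.Quotient.mk_eq_zero,
        Submodule.mem_span_singleton] at h1
      obtain ⟨c, hc⟩ := h1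
      have hdvd : p i ^ e i ∣ π ^ n := Dvd.intro c (by rw [← hc, smul_eq_mul]; ring)
      have hprime : Prime (p i) := (hp i).prime
      have hpd : p i ∣ π := hprime.dvd_of_dvd_pow
        (dvd_trans (dvd_pow_self (p i) he) hdvd)
      have hassoc : Associated (p i) π := (hp i).associated_of_dvd hπ.irreducible hpd
      have : Associated (p i ^ e i) (π ^ e i) := (Associated.pow_pow (n := e i) hassoc)
      exact Ideal.span_singleton_eq_span_singleton.mpr this
  let e2 : (∀ i : ι, R ⧸ (R ∙ (p i ^ e i))) ≃ₗ[R] ∀ i : ι, Qmod π (e i) :=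
    LinearEquiv.piCongrRight (fun i => Submodule.quotEquivOfEq _ _ (hspan i))
  let κ := Fintype.equivFin ι
  let e3 : (∀ i : ι, Qmod π (e i)) ≃ₗ[R]
      ∀ j : Fin (Fintype.card ι), Qmod π (e (κ.symm j)) :=
    (LinearEquiv.piCongrLeft R (fun i : ι => Qmod π (e i)) κ.symm).symm
  exact ⟨List.ofFn (fun j => e (κ.symm j)),
    ⟨e1.trans (e2.trans (e3.trans (piQmodToDList π _ _)))⟩⟩

end Decomp

section TensorSub
lemma tensor_subsingleton {R : Type u} [CommRing R] (A : Type u) [CommRing A] [Algebra R A]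
    (Z : Type u) [AddCommGroup Z] [Module R Z] [Subsingleton Z] :
    Subsingleton (A ⊗[R] Z) := by
  constructor
  intro x y
  have hz : ∀ t : A ⊗[R] Z, t = 0 := fun t => by
    induction t with
    | zero => rfl
    | tmul a z => rw [Subsingleton.elim z 0, TensorProduct.tmul_zero]
    | add x y hx hy => rw [hx, hy, add_zero]
  rw [hz x, hz y]

/-- An `R`-linear equivalence of modules over a localization is `A`-linear. -/
def extendLequivLoc {R : Type u} [CommRing R] (S : Submonoid R) (A : Type u) [CommRing A]
    [Algebra R A] [IsLocalization S A] {M N : Type u} [AddCommMonoid M] [Module R M]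
    [Module A M] [IsScalarTower R A M] [AddCommMonoid N] [Module R N] [Module A N]
    [IsScalarTower R A N] (e : M ≃ₗ[R] N) : M ≃ₗ[A] N :=
  LinearEquiv.ofLinear (LinearMap.extendScalarsOfIsLocalization S A e.toLinearMap)
    (LinearMap.extendScalarsOfIsLocalization S A e.symm.toLinearMap)
    (by apply LinearMap.ext; intro x; simp)
    (by apply LinearMap.ext; intro x; simp)
end TensorSub

section Len
variable {R : Type u} [CommRing R] [IsDomain R] [IsPrincipalIdealRing R]
variable (π : R) [hsp : (Ideal.span {π}).IsPrime]


lemma prime_loc (hπ : Prime π) : Prime (algebraMap R (Localization.AtPrime (Ideal.span {π})) π) := by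
  have hinj : Function.Injective (algebraMap R (Localization.AtPrime (Ideal.span {π}))) :=
    IsLocalization.injective (Localization.AtPrime (Ideal.span {π})) (Ideal.span {π}).primeCompl_le_nonZeroDivisors
  have hne : algebraMap R (Localization.AtPrime (Ideal.span {π})) π ≠ 0 := by
    intro h
    exact hπ.ne_zero (hinj (by rw [h, map_zero]))
  rw [← Ideal.span_singleton_prime hne]
  have hspan : Ideal.span {algebraMap R (Localization.AtPrime (Ideal.span {π})) π} =
      (Ideal.span {π}).map (algebraMap R (Localization.AtPrime (Ideal.span {π}))) := by
    rw [Ideal.map_span, Set.image_singleton]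
  rw [hspan]
  exact IsLocalization.isPrime_of_isPrime_disjoint (Ideal.span {π}).primeCompl (Localization.AtPrime (Ideal.span {π}))
    (Ideal.span {π}) hsp (Set.disjoint_left.mpr fun x hx hx' => hx hx')

lemma ideal_classification (hπ : Prime π) (a : ℕ) :
    ∀ J : Ideal (Localization.AtPrime (Ideal.span {π})), Ideal.span {(algebraMap R (Localization.AtPrime (Ideal.span {π})) π) ^ a} ≤ J →
      ∃ k, k ≤ a ∧ J = Ideal.span {(algebraMap R (Localization.AtPrime (Ideal.span {π})) π) ^ k} := by
  intro J hJ
  have hcom : (Ideal.comap (algebraMap R (Localization.AtPrime (Ideal.span {π}))) J).map (algebraMap R (Localization.AtPrime (Ideal.span {π}))) = J :=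
    IsLocalization.map_comap (Ideal.span {π}).primeCompl (Localization.AtPrime (Ideal.span {π})) J
  have hpr : Submodule.IsPrincipal (Ideal.comap (algebraMap R (Localization.AtPrime (Ideal.span {π}))) J) :=
    IsPrincipalIdealRing.principal _
  obtain ⟨g, hg⟩ := hpr
  have hJg : J = Ideal.span {algebraMap R (Localization.AtPrime (Ideal.span {π})) g} := by
    rw [← hcom, hg, Ideal.submodule_span_eq, Ideal.map_span, Set.image_singleton]
  have hmem : (algebraMap R (Localization.AtPrime (Ideal.span {π})) π) ^ a ∈ J := hJ (Ideal.mem_span_singleton_self _)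
  have hdvd : algebraMap R (Localization.AtPrime (Ideal.span {π})) g ∣ (algebraMap R (Localization.AtPrime (Ideal.span {π})) π) ^ a := by
    rw [← Ideal.mem_span_singleton, ← hJg]
    exact hmem
  obtain ⟨k, hk, hassoc⟩ := (dvd_prime_pow (prime_loc π hπ) a).mp hdvd
  exact ⟨k, hk, by rw [hJg, Ideal.span_singleton_eq_span_singleton.mpr hassoc]⟩

/-- Base change of `R/(π^a)` to the localization. -/
noncomputable def tensorQEquiv (a : ℕ) :
    ((Localization.AtPrime (Ideal.span {π})) ⊗[R] Qmod π a) ≃ₗ[(Localization.AtPrime (Ideal.span {π}))] ((Localization.AtPrime (Ideal.span {π})) ⧸ Ideal.span {(algebraMap R (Localization.AtPrime (Ideal.span {π})) π) ^ a}) :=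
  extendLequivLoc (Ideal.span {π}).primeCompl (Localization.AtPrime (Ideal.span {π}))
    ((TensorProduct.tensorQuotEquivQuotSMul (Localization.AtPrime (Ideal.span {π})) (Ideal.span {π ^ a})) ≪≫ₗ
      (Submodule.quotEquivOfEq _ _ (by
        rw [Ideal.smul_top_eq_map]
        congr 1
        rw [Ideal.map_span, Set.image_singleton, map_pow])) ≪≫ₗ
      (Submodule.Quotient.restrictScalarsEquiv R
        (Ideal.span {(algebraMap R (Localization.AtPrime (Ideal.span {π})) π) ^ a} : Ideal (Localization.AtPrime (Ideal.span {π})))))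

lemma len_tensor_Q (hπ : Prime π) (a : ℕ) :
    Order.krullDim (Submodule (Localization.AtPrime (Ideal.span {π})) ((Localization.AtPrime (Ideal.span {π})) ⊗[R] Qmod π a)) = ((a : ℕ) : WithBot ℕ∞) := by
  rw [Order.krullDim_eq_of_orderIso (Submodule.orderIsoMapComap (tensorQEquiv π a))]
  exact krullDim_quotient_span_pow (prime_loc π hπ) a (ideal_classification π hπ a)

lemma len_DList (hπ : Prime π) :
    ∀ s : List ℕ, Order.krullDim (Submodule (Localization.AtPrime (Ideal.span {π})) ((Localization.AtPrime (Ideal.span {π})) ⊗[R] DList R π s))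
      = ((s.sum : ℕ) : WithBot ℕ∞)
  | [] => by
    haveI := tensor_subsingleton (R := R) (Localization.AtPrime (Ideal.span {π})) (DList R π [])
    simpa using krullDim_submodule_subsingleton
  | a :: s => by
    have eP : ((Localization.AtPrime (Ideal.span {π})) ⊗[R] DList R π (a :: s)) ≃ₗ[(Localization.AtPrime (Ideal.span {π}))]
        (((Localization.AtPrime (Ideal.span {π})) ⊗[R] Qmod π a) × ((Localization.AtPrime (Ideal.span {π})) ⊗[R] DList R π s)) :=
      (TensorProduct.prodRight R (Localization.AtPrime (Ideal.span {π})) (Localization.AtPrime (Ideal.span {π})) (Qmod π a) (DList R π s))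
    rw [Order.krullDim_eq_of_orderIso (Submodule.orderIsoMapComap eP)]
    have := krullDim_submodule_prod a s.sum (len_tensor_Q π hπ a) (len_DList hπ s)
    rw [this, List.sum_cons]

lemma chiP_eq_sum (hπ : Prime π) (M : Type u) [AddCommGroup M] [Module R M]
    (s : List ℕ) (e : M ≃ₗ[R] DList R π s) :
    chiP R (Ideal.span {π}) hsp M = ((s.sum : ℕ) : WithBot ℕ∞) := by
  unfold chiP moduleLength
  rw [Order.krullDim_eq_of_orderIso
    (Submodule.orderIsoMapComap (LinearEquiv.baseChange R (Localization.AtPrime (Ideal.span {π})) M (DList R π s) e))]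
  exact len_DList π hπ s

end Len

/-- over a PID, if a 2-3 subcategory contains a finitely generated
`p`-torsion module `M` with `χ_p(M) = l` (where `p = (π)` is a nonzero prime ideal),
then it contains `(R/(π))^l`. -/
theorem twoThree_contains_socle_power (R : Type u) [CommRing R] [IsDomain R]
    [IsPrincipalIdealRing R] (π : R) (hπ : Prime π)
    (𝒞 : ModuleClass R) (h : IsTwoThreeSubcategory R 𝒞) (l : ℕ)
    (M : Type u) [AddCommGroup M] [Module R M] (hMfin : Module.Finite R M)
    (htor : ∀ x : M, ∃ n : ℕ, π ^ n • x = 0) (hM : 𝒞 M)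
    (hlen : chiP R (Ideal.span {π}) ((Ideal.span_singleton_prime hπ.ne_zero).mpr hπ) M
      = (l : WithBot ℕ∞)) :
    𝒞 (Fin l → R ⧸ Ideal.span {π}) := by
  haveI := hMfin
  haveI hsp : (Ideal.span {π}).IsPrime := (Ideal.span_singleton_prime hπ.ne_zero).mpr hπ
  obtain ⟨s, ⟨e⟩⟩ := exists_dlist_iso hπ M htor
  have hCD : 𝒞 (DList R π s) := h.2.1 M _ e hM
  have hfin : 𝒞 (Fin s.sum → Qmod π 1) := alg_final 𝒞 h hπ s hCD
  have hchi : chiP R (Ideal.span {π}) hsp M = ((s.sum : ℕ) : WithBot ℕ∞) :=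
    chiP_eq_sum π hπ M s e
  have h2 : ((s.sum : ℕ) : WithBot ℕ∞) = (l : WithBot ℕ∞) := by
    rw [← hchi]
    exact hlen
  have hl : s.sum = l := by exact_mod_cast h2
  have hfin' : 𝒞 (Fin l → Qmod π 1) := cast𝒞 𝒞 hl _ hfin
  exact cal_trans 𝒞 h
    (LinearEquiv.piCongrRight fun _ =>
      Submodule.quotEquivOfEq _ _ (by rw [pow_one])) hfin'
end SES
end

section
/- Let R be a principal ideal domain, π a prime element of R, r ≥ 1 an integer, and G any finitely generated R-module. If a 2-3 subcategory C of finitely generated R-modules contains R/(π) ⊕ R/(π^r) ⊕ G, then C contains R/(π^{r+1}) ⊕ G. -/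
open TensorProduct

universe u

section abstractSES

variable {R : Type u} [CommRing R]
variable {A B E : Type u} [AddCommGroup A] [Module R A] [AddCommGroup B] [Module R B]
  [AddCommGroup E] [Module R E]
variable (G : Type u) [AddCommGroup G] [Module R G]
variable (ι : A →ₗ[R] E) (q : E →ₗ[R] B)

/-- swap equivalence `A × (B × G) ≃ B × (A × G)` -/
def swapGen : (A × (B × G)) ≃ₗ[R] (B × (A × G)) where
  toFun p := (p.2.1, (p.1, p.2.2))
  invFun p := (p.2.1, (p.1, p.2.2))
  map_add' _ _ := rfl
  map_smul' _ _ := rfl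
  left_inv _ := rfl
  right_inv _ := rfl

/-- the injection `X → (E × G) × X`. -/
def fGen : (A × (B × G)) →ₗ[R] ((E × G) × (A × (B × G))) where
  toFun p := ((ι p.1, p.2.2), (0, (p.2.1, 0)))
  map_add' p p' := by simp [Prod.ext_iff]
  map_smul' c p := by simp [Prod.ext_iff]

/-- the surjection `(E × G) × X → B × (A × G)`. -/
def gGen : ((E × G) × (A × (B × G))) →ₗ[R] (B × (A × G)) where
  toFun m := (q m.1.1, (m.2.1, m.2.2.2))
  map_add' p p' := by simp [Prod.ext_iff]
  map_smul' c p := by simp [Prod.ext_iff]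

lemma fGen_injective (hι : Function.Injective ι) : Function.Injective (fGen (B := B) G ι) := by
  intro p p' hpq
  simp only [fGen, LinearMap.coe_mk, AddHom.coe_mk, Prod.mk.injEq] at hpq
  obtain ⟨⟨h1, h2⟩, _, h3, _⟩ := hpq
  exact Prod.ext (hι h1) (Prod.ext h3 h2)

lemma gGen_surjective (hq : Function.Surjective q) : Function.Surjective (gGen (A := A) G q) := by
  rintro ⟨b, a, g⟩
  obtain ⟨e, he⟩ := hq b
  exact ⟨((e, 0), (a, (0, g))), by simp only [gGen, LinearMap.coe_mk, AddHom.coe_mk, he]⟩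

lemma range_fGen (hcomp : ∀ a, q (ι a) = 0)
    (hexact : ∀ e, q e = 0 → ∃ a, ι a = e) :
    LinearMap.range (fGen G ι) = LinearMap.ker (gGen G q) := by
  ext m
  simp only [LinearMap.mem_range, LinearMap.mem_ker]
  constructor
  · rintro ⟨p, rfl⟩
    simp [fGen, gGen, hcomp, Prod.ext_iff]
  · intro hm
    simp only [gGen, LinearMap.coe_mk, AddHom.coe_mk, Prod.mk_eq_zero] at hm
    obtain ⟨h1, h2, h3⟩ := hm
    obtain ⟨a0, ha0⟩ := hexact _ h1
    refine ⟨(a0, (m.2.2.1, m.1.2)), ?_⟩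
    simp only [fGen, LinearMap.coe_mk, AddHom.coe_mk, ha0]
    rw [← h2, ← h3]

end abstractSES

section aux

set_option linter.unusedSectionVars false

variable {R : Type u} [CommRing R] [IsDomain R] (π : R) (r : ℕ)

noncomputable def iotaAux : (R ⧸ Ideal.span {π}) →ₗ[R] R ⧸ Ideal.span {π ^ (r + 1)} :=
  Submodule.liftQ _ (π ^ r • (Ideal.span {π ^ (r + 1)}).mkQ) (by
    intro x hx
    rw [Ideal.mem_span_singleton] at hx
    obtain ⟨y, rfl⟩ := hx
    simp only [LinearMap.mem_ker, LinearMap.smul_apply, Submodule.mkQ_apply]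
    rw [← Submodule.Quotient.mk_smul, Submodule.Quotient.mk_eq_zero,
      Ideal.mem_span_singleton, smul_eq_mul]
    exact ⟨y, by ring⟩)

lemma iotaAux_mk (x : R) :
    iotaAux π r (Submodule.Quotient.mk x) = Submodule.Quotient.mk (π ^ r * x) := by
  simp only [iotaAux, Submodule.liftQ_apply, LinearMap.smul_apply, Submodule.mkQ_apply]
  rw [← Submodule.Quotient.mk_smul, smul_eq_mul]

noncomputable def qAux : (R ⧸ Ideal.span {π ^ (r + 1)}) →ₗ[R] R ⧸ Ideal.span {π ^ r} :=
  Submodule.mapQ _ _ LinearMap.id (by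
    intro x hx
    simp only [Submodule.mem_comap, LinearMap.id_apply]
    rw [Ideal.mem_span_singleton] at hx ⊢
    exact dvd_trans (pow_dvd_pow π (Nat.le_succ r)) hx)

lemma qAux_mk (x : R) :
    qAux π r (Submodule.Quotient.mk x) = Submodule.Quotient.mk x := by
  simp only [qAux, Submodule.mapQ_apply, LinearMap.id_apply]

lemma iotaAux_injective (hπ : Prime π) : Function.Injective (iotaAux π r) := by
  intro a b hab
  obtain ⟨x, rfl⟩ := Submodule.Quotient.mk_surjective _ a
  obtain ⟨y, rfl⟩ := Submodule.Quotient.mk_surjective _ b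
  rw [iotaAux_mk, iotaAux_mk, Submodule.Quotient.eq] at hab
  rw [Ideal.mem_span_singleton] at hab
  obtain ⟨c, hc⟩ := hab
  rw [Submodule.Quotient.eq, Ideal.mem_span_singleton]
  refine ⟨c, ?_⟩
  have h0 : π ^ r ≠ 0 := pow_ne_zero r hπ.ne_zero
  apply mul_left_cancel₀ h0
  rw [← mul_sub] at hc
  rw [hc]; ring

lemma qAux_surjective : Function.Surjective (qAux π r) := by
  intro b
  obtain ⟨y, rfl⟩ := Submodule.Quotient.mk_surjective _ b
  exact ⟨Submodule.Quotient.mk y, qAux_mk π r y⟩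

lemma qAux_iotaAux (a : R ⧸ Ideal.span {π}) : qAux π r (iotaAux π r a) = 0 := by
  obtain ⟨x, rfl⟩ := Submodule.Quotient.mk_surjective _ a
  rw [iotaAux_mk, qAux_mk, Submodule.Quotient.mk_eq_zero, Ideal.mem_span_singleton]
  exact ⟨x, rfl⟩

lemma exists_iotaAux (e : R ⧸ Ideal.span {π ^ (r + 1)}) (he : qAux π r e = 0) :
    ∃ a, iotaAux π r a = e := by
  obtain ⟨y, rfl⟩ := Submodule.Quotient.mk_surjective _ e
  rw [qAux_mk, Submodule.Quotient.mk_eq_zero, Ideal.mem_span_singleton] at he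
  obtain ⟨c, rfl⟩ := he
  exact ⟨Submodule.Quotient.mk c, iotaAux_mk π r c⟩

end aux

/-- over a PID, if a 2-3 subcategory contains `R/(π) ⊕ R/(π^r) ⊕ G`
(with `π` prime, `r ≥ 1`, `G` finitely generated), then it contains `R/(π^(r+1)) ⊕ G`. -/
theorem twoThree_raise_order (R : Type u) [CommRing R] [IsDomain R]
    [IsPrincipalIdealRing R] (π : R) (hπ : Prime π) (r : ℕ) (hr : 1 ≤ r)
    (G : Type u) [AddCommGroup G] [Module R G] (hG : Module.Finite R G)
    (𝒞 : ModuleClass R) (h : IsTwoThreeSubcategory R 𝒞)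
    (hmem : 𝒞 ((R ⧸ Ideal.span {π}) × ((R ⧸ Ideal.span {π ^ r}) × G))) :
    𝒞 ((R ⧸ Ideal.span {π ^ (r + 1)}) × G) := by
  haveI := hG
  obtain ⟨hfin, hiso, hses⟩ := h
  haveI hA : Module.Finite R (R ⧸ Ideal.span {π}) :=
    Module.Finite.of_surjective (Ideal.span {π}).mkQ (Submodule.Quotient.mk_surjective _)
  haveI hB : Module.Finite R (R ⧸ Ideal.span {π ^ r}) :=
    Module.Finite.of_surjective (Ideal.span {π ^ r}).mkQ (Submodule.Quotient.mk_surjective _)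
  haveI hE : Module.Finite R (R ⧸ Ideal.span {π ^ (r + 1)}) :=
    Module.Finite.of_surjective (Ideal.span {π ^ (r + 1)}).mkQ
      (Submodule.Quotient.mk_surjective _)
  -- the swapped known member
  have hmem' : 𝒞 ((R ⧸ Ideal.span {π ^ r}) × ((R ⧸ Ideal.span {π}) × G)) :=
    hiso _ _ (swapGen G) hmem
  -- first SES : X injects into M := (E × G) × X with quotient ≅ B × (A × G)
  have hses1 := hses ((R ⧸ Ideal.span {π}) × ((R ⧸ Ideal.span {π ^ r}) × G))
    (((R ⧸ Ideal.span {π ^ (r + 1)}) × G) ×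
      ((R ⧸ Ideal.span {π}) × ((R ⧸ Ideal.span {π ^ r}) × G)))
    ((R ⧸ Ideal.span {π ^ r}) × ((R ⧸ Ideal.span {π}) × G))
    inferInstance inferInstance inferInstance
    (fGen G (iotaAux π r)) (gGen G (qAux π r))
    (fGen_injective G _ (iotaAux_injective π r hπ))
    (gGen_surjective G _ (qAux_surjective π r))
    (range_fGen G _ _ (qAux_iotaAux π r) (exists_iotaAux π r))
  have hM : 𝒞 (((R ⧸ Ideal.span {π ^ (r + 1)}) × G) ×
      ((R ⧸ Ideal.span {π}) × ((R ⧸ Ideal.span {π ^ r}) × G))) :=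
    hses1.2.1 hmem hmem'
  -- second (split) SES : X injects into M with quotient E × G
  have hses2 := hses ((R ⧸ Ideal.span {π}) × ((R ⧸ Ideal.span {π ^ r}) × G))
    (((R ⧸ Ideal.span {π ^ (r + 1)}) × G) ×
      ((R ⧸ Ideal.span {π}) × ((R ⧸ Ideal.span {π ^ r}) × G)))
    ((R ⧸ Ideal.span {π ^ (r + 1)}) × G)
    inferInstance inferInstance inferInstance
    (LinearMap.inr R _ _) (LinearMap.fst R _ _)
    LinearMap.inr_injective LinearMap.fst_surjective
    (by rw [LinearMap.range_inr, LinearMap.ker_fst])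
  exact hses2.1 hmem hM
end
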